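/- arXiv:2402.01567 — 7 statements merged into one kernel-verified Lean document; each statement's English description precedes it below -/
import Mathlib

section
/- Discounted-to-dynamic conversion: for any online learning algorithm producing outputs Δ_0,...,Δ_{T-1} against losses v_1,...,v_T, any comparator sequence u_0,...,u_{T-1}, any β ∈ (0,1], any partition of [1,T] into consecutive intervals [a_1,b_1],...,[a_N,b_N] (a_1 = 1, b_N = T, a_{i+1} = b_i + 1), and any reals ū_1,...,ū_N, the dynamic regret ∑_{t=1}^T v_t (Δ_{t-1} - u_{t-1}) equals β R_{T;β}(ū_N) + (1-β) ∑_{i=1}^N ∑_{t∈[a_i,b_i]} R_{t;β}(ū_i) + β ∑_{i=1}^{N-1} (∑_{t=1}^{b_i} β^{b_i - t} v_t)(ū_{i+1} - ū_i) + ∑_{i=1}^N ∑_{t∈[a_i,b_i]} v_t (ū_i - u_{t-1}). -/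
/-!
Write `R_t(x)` for the discounted regret and `S_t` for the discounted loss `∑_{s ≤ t} β^{t-s} v_s`.
Since `R_t(x) = β R_{t-1}(x) + v_t (Δ_{t-1} - x)`, the instantaneous regret on a block `(p, q]` is
`(1 - β) ∑_{t ∈ (p, q]} R_t(x) + β (R_q(x) - R_p(x))`, and `R` is affine in the comparator with slope
`-S_t`. Summing over the blocks, the boundary terms `β (R_{b_i}(ū_i) - R_{b_{i-1}}(ū_i))` telescope
once the comparator in `R_{b_{i-1}}` is switched from `ū_i` back to `ū_{i-1}`, at the cost of
`β S_{b_{i-1}} (ū_i - ū_{i-1})`.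
-/

open Finset

noncomputable section

namespace DiscountedRegret

variable (β : ℝ) (v Δ : ℕ → ℝ)

def regret (t : ℕ) (x : ℝ) : ℝ :=
  ∑ s ∈ Icc 1 t, β ^ (t - s) * v s * (Δ (s - 1) - x)

def loss (t : ℕ) : ℝ :=
  ∑ s ∈ Icc 1 t, β ^ (t - s) * v s

variable {β v Δ}

@[simp]
theorem regret_zero (x : ℝ) : regret β v Δ 0 x = 0 := by
  simp [regret]

@[simp]
theorem loss_zero : loss β v 0 = 0 := by
  simp [loss]

theorem regret_succ (t : ℕ) (x : ℝ) :
    regret β v Δ (t + 1) x = β * regret β v Δ t x + v (t + 1) * (Δ t - x) := by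
  rw [regret, regret, sum_Icc_succ_top (by omega), mul_sum]
  congr 1
  · refine sum_congr rfl fun s hs => ?_
    rw [Nat.succ_sub (mem_Icc.mp hs).2, pow_succ]
    ring
  · simp

theorem regret_sub_regret (t : ℕ) (x y : ℝ) :
    regret β v Δ t x - regret β v Δ t y = loss β v t * (y - x) := by
  rw [regret, regret, ← sum_sub_distrib, loss, sum_mul]
  exact sum_congr rfl fun s _ => by ring

variable (β) in
theorem sum_Ioc_staticRegret {p q : ℕ} (hpq : p ≤ q) (x : ℝ) :
    ∑ t ∈ Ioc p q, v t * (Δ (t - 1) - x)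
      = (1 - β) * ∑ t ∈ Ioc p q, regret β v Δ t x
        + β * (regret β v Δ q x - regret β v Δ p x) := by
  induction q, hpq using Nat.le_induction with
  | base => simp
  | succ q hpq ih =>
    rw [sum_Ioc_succ_top hpq, sum_Ioc_succ_top hpq, ih, regret_succ, Nat.add_sub_cancel]
    ring

variable (β) in
/-- `x` is the comparator of the block `(p, q]`, `y` that of the block ending at `p`. -/
theorem sum_Ioc_dynamicRegret {p q : ℕ} (hpq : p ≤ q) (u : ℕ → ℝ) (x y : ℝ) :
    ∑ t ∈ Ioc p q, v t * (Δ (t - 1) - u (t - 1))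
      = β * (regret β v Δ q x - regret β v Δ p y)
        + (1 - β) * ∑ t ∈ Ioc p q, regret β v Δ t x
        + β * (loss β v p * (x - y))
        + ∑ t ∈ Ioc p q, v t * (x - u (t - 1)) := by
  have hsplit : ∑ t ∈ Ioc p q, v t * (Δ (t - 1) - u (t - 1))
      = ∑ t ∈ Ioc p q, v t * (Δ (t - 1) - x) + ∑ t ∈ Ioc p q, v t * (x - u (t - 1)) := by
    rw [← sum_add_distrib]
    exact sum_congr rfl fun t _ => by ring
  rw [hsplit, sum_Ioc_staticRegret β hpq, ← regret_sub_regret p y x]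
  ring

theorem Icc_one_eq_Ioc_zero (n : ℕ) : Icc 1 n = Ioc 0 n :=
  Icc_add_one_left_eq_Ioc 0 n

theorem sum_Icc_dynamicRegret (u ubar : ℕ → ℝ) (a b : ℕ → ℕ) (ha1 : a 1 = 1) (m : ℕ)
    (hcons : ∀ i ∈ Icc 1 m, a (i + 1) = b i + 1) (hle : ∀ i ∈ Icc 1 (m + 1), a i ≤ b i) :
    ∑ t ∈ Icc 1 (b (m + 1)), v t * (Δ (t - 1) - u (t - 1))
      = β * regret β v Δ (b (m + 1)) (ubar (m + 1))
        + (1 - β) * ∑ i ∈ Icc 1 (m + 1), ∑ t ∈ Icc (a i) (b i), regret β v Δ t (ubar i)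
        + β * ∑ i ∈ Icc 1 m, loss β v (b i) * (ubar (i + 1) - ubar i)
        + ∑ i ∈ Icc 1 (m + 1), ∑ t ∈ Icc (a i) (b i), v t * (ubar i - u (t - 1)) := by
  induction m with
  | zero =>
    rw [Icc_self, sum_singleton, sum_singleton, ha1, Icc_one_eq_Ioc_zero,
      sum_Ioc_dynamicRegret β (Nat.zero_le _) u (ubar 1) (ubar 1)]
    simp
  | succ m ih =>
    have hcons' : a (m + 2) = b (m + 1) + 1 := hcons (m + 1) (by simp)
    have hblock : Icc (a (m + 2)) (b (m + 2)) = Ioc (b (m + 1)) (b (m + 2)) := by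
      rw [hcons', Icc_add_one_left_eq_Ioc]
    have hmono : b (m + 1) ≤ b (m + 2) := by
      have := hle (m + 2) (by simp)
      omega
    rw [Icc_one_eq_Ioc_zero, ← sum_Ioc_consecutive _ (Nat.zero_le _) hmono, ← Icc_one_eq_Ioc_zero,
      ih (fun i hi => hcons i (by simp at hi ⊢; omega)) (fun i hi => hle i (by simp at hi ⊢; omega)),
      sum_Ioc_dynamicRegret β hmono u (ubar (m + 2)) (ubar (m + 1)),
      sum_Icc_succ_top (by omega : 1 ≤ m + 2) (fun i => ∑ t ∈ Icc (a i) (b i), _),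
      sum_Icc_succ_top (by omega : 1 ≤ m + 2) (fun i => ∑ t ∈ Icc (a i) (b i), _),
      sum_Icc_succ_top (by omega : 1 ≤ m + 1) (fun i => loss β v (b i) * _), hblock]
    ring

end DiscountedRegret

end

open DiscountedRegret in
theorem stmt_4_general (T N : ℕ) (hN : 1 ≤ N)
    (v Δ u : ℕ → ℝ) (β : ℝ)
    (a b : ℕ → ℕ) (ubar : ℕ → ℝ)
    (ha1 : a 1 = 1) (hbN : b N = T)
    (hcons : ∀ i ∈ Finset.Icc 1 (N - 1), a (i + 1) = b i + 1)
    (hle : ∀ i ∈ Finset.Icc 1 N, a i ≤ b i)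
    (R : ℕ → ℝ → ℝ)
    (hR : ∀ t x, R t x = ∑ s ∈ Finset.Icc 1 t, β ^ (t - s) * v s * (Δ (s - 1) - x)) :
    ∑ t ∈ Finset.Icc 1 T, v t * (Δ (t - 1) - u (t - 1))
      = β * R T (ubar N)
        + (1 - β) * ∑ i ∈ Finset.Icc 1 N, ∑ t ∈ Finset.Icc (a i) (b i), R t (ubar i)
        + β * ∑ i ∈ Finset.Icc 1 (N - 1),
            (∑ t ∈ Finset.Icc 1 (b i), β ^ (b i - t) * v t) * (ubar (i + 1) - ubar i)
        + ∑ i ∈ Finset.Icc 1 N, ∑ t ∈ Finset.Icc (a i) (b i), v t * (ubar i - u (t - 1)) := by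
  obtain rfl : R = regret β v Δ := funext fun t => funext (hR t)
  obtain ⟨m, rfl⟩ : ∃ m, N = m + 1 := ⟨N - 1, by omega⟩
  subst hbN
  exact sum_Icc_dynamicRegret u ubar a b ha1 m hcons hle

theorem stmt_4 (T N : ℕ) (hT : 1 ≤ T) (hN : 1 ≤ N)
    (v Δ u : ℕ → ℝ) (β : ℝ) (hβ : β ∈ Set.Ioc (0:ℝ) 1)
    (a b : ℕ → ℕ) (ubar : ℕ → ℝ)
    (ha1 : a 1 = 1) (hbN : b N = T)
    (hcons : ∀ i ∈ Finset.Icc 1 (N - 1), a (i + 1) = b i + 1)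
    (hle : ∀ i ∈ Finset.Icc 1 N, a i ≤ b i)
    (R : ℕ → ℝ → ℝ)
    (hR : ∀ t x, R t x = ∑ s ∈ Finset.Icc 1 t, β ^ (t - s) * v s * (Δ (s - 1) - x)) :
    ∑ t ∈ Finset.Icc 1 T, v t * (Δ (t - 1) - u (t - 1))
      = β * R T (ubar N)
        + (1 - β) * ∑ i ∈ Finset.Icc 1 N, ∑ t ∈ Finset.Icc (a i) (b i), R t (ubar i)
        + β * ∑ i ∈ Finset.Icc 1 (N - 1),
            (∑ t ∈ Finset.Icc 1 (b i), β ^ (b i - t) * v t) * (ubar (i + 1) - ubar i)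
        + ∑ i ∈ Finset.Icc 1 N, ∑ t ∈ Finset.Icc (a i) (b i), v t * (ubar i - u (t - 1)) :=
  stmt_4_general T N hN v Δ u β a b ubar ha1 hbN hcons hle R hR
end

section
/- Static regret of scale-free FTRL: for all T > 0, any loss sequence v_1,...,v_T ∈ ℝ, and any comparator u ∈ ℝ, the iterates Δ_0 = 0 and Δ_t = -α (∑_{s=1}^t v_s)/√(∑_{s=1}^t v_s^2) (with Δ_t = 0 when the denominator vanishes) satisfy ∑_{t=1}^T v_t (Δ_{t-1} - u) ≤ (u^2/(2α) + √2 α) √(∑_{t=1}^T v_t^2) + 2 (max_{t∈[1,T]} |Δ_t|)(max_{t∈[1,T]} |v_t|). -/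
/-!
Write `S_t` and `H_t = √(∑_{s ≤ t} v_s ^ 2)` for the running sum and norm of the losses, so that
`Δ_t = -α S_t / H_t`, and let `Φ_t = α S_t ^ 2 / (2 H_t)`. Then the regret telescopes into
`∑_t (v_t Δ_{t-1} + Φ_t - Φ_{t-1}) - Φ_T - S_T u`, and `-Φ_T - S_T u ≤ u ^ 2 H_T / (2 α)` by AM-GM.
In a round with `v_t ^ 2 ≤ H_{t-1} ^ 2` strong convexity bounds the increment by
`α v_t ^ 2 / (2 H_{t-1})`, and `H_t ≤ √2 H_{t-1}` turns this into `√2 α (H_t - H_{t-1})`. In any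
other round the increment is at most `(α + |Δ_{t-1}|) (H_t - H_{t-1})`; the increments of `H` over
these rounds add up to at most `H_m` for the last such round `m`, and `H_m ≤ √2 |v_m|`.
-/

open Finset

namespace ScaleFreeFTRL

/-- The round-`t` term `v_t Δ_{t-1} + Φ_t - Φ_{t-1}`, written with `x = S_{t-1} / H_{t-1}`,
`h = H_{t-1}`, `H = H_t` and `w = v_t`. -/
noncomputable def roundRegret (α x h H w : ℝ) : ℝ :=
  -α * x * w + α * (x * h + w) ^ 2 / (2 * H) - α * x ^ 2 * h / 2

section Step

variable {α x h H w : ℝ}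

lemma le_of_sq_eq_add_sq (hH0 : 0 ≤ H) (hH : H ^ 2 = h ^ 2 + w ^ 2) : h ≤ H :=
  le_of_sq_le_sq (by linarith [sq_nonneg w]) hH0

lemma abs_le_of_sq_eq_add_sq (hH0 : 0 ≤ H) (hH : H ^ 2 = h ^ 2 + w ^ 2) : |w| ≤ H :=
  abs_le_of_sq_le_sq (by linarith [sq_nonneg h]) hH0

lemma roundRegret_le (hα : 0 ≤ α) (hh : 0 ≤ h) (hH0 : 0 ≤ H) (hH : H ^ 2 = h ^ 2 + w ^ 2) :
    roundRegret α x h H w ≤ (α + α * |x|) * (H - h) := by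
  unfold roundRegret
  rcases hH0.eq_or_lt with rfl | hHpos
  · obtain ⟨rfl, rfl⟩ : h = 0 ∧ w = 0 := by
      constructor <;> nlinarith [sq_nonneg h, sq_nonneg w]
    simp
  have hhH := le_of_sq_eq_add_sq hH0 hH
  have hwH := abs_le_of_sq_eq_add_sq hH0 hH
  have hxw : -(x * w) ≤ |x| * H := by
    calc -(x * w) ≤ |x * w| := neg_le_abs _
      _ = |x| * |w| := abs_mul x w
      _ ≤ |x| * H := by gcongr
  have hE : α * (H + h) - α * x ^ 2 * h - 2 * α * x * w ≤ 2 * H * (α + α * |x|) := by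
    nlinarith [mul_nonneg hα (mul_nonneg (sq_nonneg x) hh), mul_le_mul_of_nonneg_left hxw hα]
  calc -α * x * w + α * (x * h + w) ^ 2 / (2 * H) - α * x ^ 2 * h / 2
      = (H - h) / (2 * H) * (α * (H + h) - α * x ^ 2 * h - 2 * α * x * w) := by
        field_simp
        linear_combination (-α) * hH
    _ ≤ (H - h) / (2 * H) * (2 * H * (α + α * |x|)) := by
        gcongr
    _ = (α + α * |x|) * (H - h) := by field_simp

lemma roundRegret_le_sq_div (hα : 0 ≤ α) (hh : 0 < h) (hhH : h ≤ H) :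
    roundRegret α x h H w ≤ α * w ^ 2 / (2 * h) := by
  unfold roundRegret
  have hHpos : 0 < H := hh.trans_le hhH
  have key : α * w ^ 2 / (2 * h)
      - (-α * x * w + α * (x * h + w) ^ 2 / (2 * H) - α * x ^ 2 * h / 2)
      = α * (H - h) * (x * h + w) ^ 2 / (2 * H * h) := by
    field_simp
    ring
  have : 0 ≤ α * (H - h) * (x * h + w) ^ 2 / (2 * H * h) := by
    have := sub_nonneg.2 hhH
    positivity
  linarith

lemma sq_div_le_of_sq_le (hα : 0 ≤ α) (hh : 0 < h) (hH0 : 0 ≤ H) (hH : H ^ 2 = h ^ 2 + w ^ 2)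
    (hw : w ^ 2 ≤ h ^ 2) : α * w ^ 2 / (2 * h) ≤ √2 * α * (H - h) := by
  have hhH := le_of_sq_eq_add_sq hH0 hH
  have hH2 : H ≤ √2 * h := le_of_sq_le_sq (by rw [mul_pow, Real.sq_sqrt zero_le_two]; linarith)
    (by positivity)
  have hαd : 0 ≤ α * (H - h) := mul_nonneg hα (sub_nonneg.2 hhH)
  rw [div_le_iff₀ (by positivity)]
  nlinarith [mul_le_mul_of_nonneg_left hH2 hαd,
    mul_le_mul_of_nonneg_left Real.one_lt_sqrt_two.le (mul_nonneg hαd hh.le)]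

lemma roundRegret_le_of_sq_le (hα : 0 ≤ α) (hh : 0 ≤ h) (hH0 : 0 ≤ H) (hH : H ^ 2 = h ^ 2 + w ^ 2)
    (hw : w ^ 2 ≤ h ^ 2) :
    roundRegret α x h H w ≤ √2 * α * (H - h) := by
  rcases hh.eq_or_lt with rfl | hpos
  · unfold roundRegret
    obtain rfl : w = 0 := pow_eq_zero_iff two_ne_zero |>.1 (by nlinarith [sq_nonneg w])
    obtain rfl : H = 0 := pow_eq_zero_iff two_ne_zero |>.1 (by simpa using hH)
    simp
  · exact (roundRegret_le_sq_div hα hpos (le_of_sq_eq_add_sq hH0 hH)).trans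
      (sq_div_le_of_sq_le hα hpos hH0 hH hw)

end Step

lemma sum_Icc_one_sub_pred {M : Type*} [AddCommGroup M] (f : ℕ → M) (n : ℕ) :
    ∑ t ∈ Icc 1 n, (f t - f (t - 1)) = f n - f 0 := by
  induction n with
  | zero => simp
  | succ n ih => rw [sum_Icc_succ_top (by omega), ih, Nat.add_sub_cancel]; abel

lemma sum_Icc_ite_sub_pred_le {H : ℕ → ℝ} (hH : Monotone H) {p : ℕ → Prop} [DecidablePred p]
    {c : ℝ} (hc : 0 ≤ c) {n : ℕ} (hp : ∀ t ∈ Icc 1 n, p t → H t - H 0 ≤ c) :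
    ∑ t ∈ Icc 1 n, (if p t then H t - H (t - 1) else 0) ≤ c := by
  suffices ∀ m ≤ n, ∑ t ∈ Icc 1 m, (if p t then H t - H (t - 1) else 0) ≤ min (H m - H 0) c from
    (this n le_rfl).trans (min_le_right _ _)
  intro m hm
  induction m with
  | zero => simp [hc]
  | succ m ih =>
    have ih := le_min_iff.1 (ih (by omega))
    rw [sum_Icc_succ_top (by omega), Nat.add_sub_cancel]
    split_ifs with hpm
    · exact le_min (by linarith) (by linarith [hp (m + 1) (mem_Icc.2 ⟨by omega, hm⟩) hpm])
    · exact le_min (by linarith [hH m.le_succ]) (by linarith)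

noncomputable def cumSum (v : ℕ → ℝ) (t : ℕ) : ℝ := ∑ s ∈ Icc 1 t, v s

noncomputable def cumSq (v : ℕ → ℝ) (t : ℕ) : ℝ := ∑ s ∈ Icc 1 t, v s ^ 2

noncomputable def cumNorm (v : ℕ → ℝ) (t : ℕ) : ℝ := √(cumSq v t)

/-- `-potential α v t` is the minimum of the FTRL objective
`x ↦ cumNorm v t * x ^ 2 / (2 * α) + cumSum v t * x`, attained at the iterate. -/
noncomputable def potential (α : ℝ) (v : ℕ → ℝ) (t : ℕ) : ℝ :=
  α * cumSum v t ^ 2 / (2 * cumNorm v t)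

section Sequence

variable (v : ℕ → ℝ)

@[simp] lemma cumSum_zero : cumSum v 0 = 0 := by simp [cumSum]

@[simp] lemma cumNorm_zero : cumNorm v 0 = 0 := by simp [cumNorm, cumSq]

lemma cumSum_succ (n : ℕ) : cumSum v (n + 1) = cumSum v n + v (n + 1) :=
  sum_Icc_succ_top (by omega) _

lemma cumSq_succ (n : ℕ) : cumSq v (n + 1) = cumSq v n + v (n + 1) ^ 2 :=
  sum_Icc_succ_top (by omega) _

lemma cumSq_nonneg (t : ℕ) : 0 ≤ cumSq v t := sum_nonneg fun _ _ => sq_nonneg _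

lemma cumNorm_nonneg (t : ℕ) : 0 ≤ cumNorm v t := Real.sqrt_nonneg _

lemma cumNorm_sq (t : ℕ) : cumNorm v t ^ 2 = cumSq v t := Real.sq_sqrt (cumSq_nonneg v t)

lemma cumNorm_succ_sq (n : ℕ) : cumNorm v (n + 1) ^ 2 = cumNorm v n ^ 2 + v (n + 1) ^ 2 := by
  rw [cumNorm_sq, cumNorm_sq, cumSq_succ]

lemma cumNorm_monotone : Monotone (cumNorm v) := fun _ _ hab =>
  Real.sqrt_le_sqrt <| sum_le_sum_of_subset_of_nonneg (Icc_subset_Icc_right hab)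
    fun _ _ _ => sq_nonneg _

lemma cumSum_eq_zero_of_cumNorm_eq_zero {t : ℕ} (ht : cumNorm v t = 0) : cumSum v t = 0 := by
  have hsq : cumSq v t = 0 := by rw [← cumNorm_sq, ht, sq, zero_mul]
  refine sum_eq_zero fun s hs => ?_
  exact pow_eq_zero_iff two_ne_zero |>.1 <|
    (sum_eq_zero_iff_of_nonneg fun _ _ => sq_nonneg _).1 hsq s hs

lemma cumSum_div_mul_cumNorm (t : ℕ) : cumSum v t / cumNorm v t * cumNorm v t = cumSum v t := by
  by_cases ht : cumNorm v t = 0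
  · rw [ht, cumSum_eq_zero_of_cumNorm_eq_zero v ht, mul_zero]
  · exact div_mul_cancel₀ _ ht

lemma potential_eq_mul_sq (α : ℝ) (t : ℕ) :
    potential α v t = α * (cumSum v t / cumNorm v t) ^ 2 * cumNorm v t / 2 := by
  by_cases ht : cumNorm v t = 0
  · simp [potential, ht]
  · simp only [potential]
    field_simp

lemma cumNorm_le_sqrt_two_mul_abs {n : ℕ} (hn : cumSq v n < v (n + 1) ^ 2) :
    cumNorm v (n + 1) ≤ √2 * |v (n + 1)| := by
  rw [← Real.sqrt_sq_eq_abs, ← Real.sqrt_mul zero_le_two]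
  exact Real.sqrt_le_sqrt (by rw [cumSq_succ]; linarith)

lemma regret_increment_le {α D : ℝ} (hα : 0 ≤ α) {t : ℕ} (ht : 1 ≤ t)
    (hD : |-α * cumSum v (t - 1) / cumNorm v (t - 1)| ≤ D) :
    v t * (-α * cumSum v (t - 1) / cumNorm v (t - 1)) + potential α v t - potential α v (t - 1)
      ≤ √2 * α * (cumNorm v t - cumNorm v (t - 1))
        + D * (if cumSq v (t - 1) < v t ^ 2 then cumNorm v t - cumNorm v (t - 1) else 0) := by
  obtain ⟨n, rfl⟩ := Nat.exists_eq_add_of_le' ht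
  rw [Nat.add_sub_cancel] at hD ⊢
  set x := cumSum v n / cumNorm v n
  have hS : cumSum v (n + 1) = x * cumNorm v n + v (n + 1) := by
    rw [cumSum_succ, cumSum_div_mul_cumNorm]
  rw [mul_div_assoc, abs_mul, abs_neg, abs_of_nonneg hα] at hD
  rw [mul_div_assoc, potential_eq_mul_sq v α n, potential, hS]
  have hh := cumNorm_nonneg v n
  have hH0 := cumNorm_nonneg v (n + 1)
  have hH := cumNorm_succ_sq v n
  have hhH := cumNorm_monotone v n.le_succ
  split_ifs with hbad
  · calc _ = roundRegret α x (cumNorm v n) (cumNorm v (n + 1)) (v (n + 1)) := by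
            rw [roundRegret]; ring
      _ ≤ (α + α * |x|) * (cumNorm v (n + 1) - cumNorm v n) := roundRegret_le hα hh hH0 hH
      _ ≤ (√2 * α + D) * (cumNorm v (n + 1) - cumNorm v n) := by
          gcongr
          exact le_mul_of_one_le_left hα Real.one_lt_sqrt_two.le
      _ = _ := by ring
  · have hw : v (n + 1) ^ 2 ≤ cumNorm v n ^ 2 := by rw [cumNorm_sq]; exact not_lt.1 hbad
    calc _ = roundRegret α x (cumNorm v n) (cumNorm v (n + 1)) (v (n + 1)) := by
            rw [roundRegret]; ring
      _ ≤ √2 * α * (cumNorm v (n + 1) - cumNorm v n) := roundRegret_le_of_sq_le hα hh hH0 hH hw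
      _ = _ := by ring

lemma neg_potential_sub_mul_le {α : ℝ} (hα : 0 < α) (t : ℕ) (u : ℝ) :
    -potential α v t - cumSum v t * u ≤ u ^ 2 / (2 * α) * cumNorm v t := by
  rcases (cumNorm_nonneg v t).eq_or_lt with ht | ht
  · simp [potential, ← ht, cumSum_eq_zero_of_cumNorm_eq_zero v ht.symm]
  · have key : u ^ 2 / (2 * α) * cumNorm v t - (-potential α v t - cumSum v t * u)
        = (α * cumSum v t + cumNorm v t * u) ^ 2 / (2 * α * cumNorm v t) := by
      simp only [potential]
      field_simp
      ring
    have : 0 ≤ (α * cumSum v t + cumNorm v t * u) ^ 2 / (2 * α * cumNorm v t) := by positivity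
    linarith

lemma sum_ite_cumNorm_sub_pred_le {L : ℝ} (hL : 0 ≤ L) {T : ℕ} (hv : ∀ t ∈ Icc 1 T, |v t| ≤ L) :
    ∑ t ∈ Icc 1 T, (if cumSq v (t - 1) < v t ^ 2 then cumNorm v t - cumNorm v (t - 1) else 0)
      ≤ √2 * L := by
  refine sum_Icc_ite_sub_pred_le (cumNorm_monotone v) (by positivity) fun t ht hbig => ?_
  obtain ⟨n, rfl⟩ := Nat.exists_eq_add_of_le' (mem_Icc.1 ht).1
  rw [Nat.add_sub_cancel] at hbig
  rw [cumNorm_zero, sub_zero]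
  exact (cumNorm_le_sqrt_two_mul_abs v hbig).trans (by gcongr; exact hv _ ht)

lemma potential_zero (α : ℝ) : potential α v 0 = 0 := by simp [potential]

lemma sum_mul_sub_eq {Φ Δ : ℕ → ℝ} (hΦ : Φ 0 = 0) (T : ℕ) (u : ℝ) :
    ∑ t ∈ Icc 1 T, v t * (Δ (t - 1) - u)
      = ∑ t ∈ Icc 1 T, (v t * Δ (t - 1) + Φ t - Φ (t - 1)) + (-Φ T - cumSum v T * u) := by
  simp only [add_sub_assoc]
  rw [sum_add_distrib, sum_Icc_one_sub_pred Φ, hΦ, cumSum, sum_mul]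
  simp only [mul_sub, sum_sub_distrib]
  ring

lemma sum_regret_increment_le {α D L : ℝ} (hα : 0 ≤ α) {Δ : ℕ → ℝ}
    (hΔ : ∀ t, Δ t = -α * cumSum v t / cumNorm v t) (hD0 : 0 ≤ D) (hL0 : 0 ≤ L) {T : ℕ}
    (hD : ∀ t ∈ Icc 1 T, |Δ (t - 1)| ≤ D) (hv : ∀ t ∈ Icc 1 T, |v t| ≤ L) :
    ∑ t ∈ Icc 1 T, (v t * Δ (t - 1) + potential α v t - potential α v (t - 1))
      ≤ √2 * α * cumNorm v T + √2 * D * L :=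
  calc _ ≤ ∑ t ∈ Icc 1 T, (√2 * α * (cumNorm v t - cumNorm v (t - 1))
          + D * if cumSq v (t - 1) < v t ^ 2 then cumNorm v t - cumNorm v (t - 1) else 0) :=
        sum_le_sum fun t ht => by
          rw [hΔ]
          exact regret_increment_le v hα (mem_Icc.1 ht).1 (hΔ (t - 1) ▸ hD t ht)
    _ = √2 * α * cumNorm v T + D * ∑ t ∈ Icc 1 T,
          (if cumSq v (t - 1) < v t ^ 2 then cumNorm v t - cumNorm v (t - 1) else 0) := by
        rw [sum_add_distrib, ← mul_sum, ← mul_sum, sum_Icc_one_sub_pred, cumNorm_zero, sub_zero]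
    _ ≤ √2 * α * cumNorm v T + D * (√2 * L) := by
        gcongr
        exact sum_ite_cumNorm_sub_pred_le v hL0 hv
    _ = _ := by ring

end Sequence

/-- The `if` is redundant in Lean: dividing by `cumNorm v t = 0` already gives `0`. -/
lemma iterate_eq {α : ℝ} {v Δ : ℕ → ℝ} (hΔ0 : Δ 0 = 0)
    (hΔ : ∀ t, 1 ≤ t →
      Δ t = if (∑ s ∈ Icc 1 t, (v s) ^ 2) = 0 then 0
        else -α * (∑ s ∈ Icc 1 t, v s) / Real.sqrt (∑ s ∈ Icc 1 t, (v s) ^ 2))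
    (t : ℕ) : Δ t = -α * cumSum v t / cumNorm v t := by
  rcases Nat.eq_zero_or_pos t with rfl | ht
  · simp [hΔ0]
  · rw [hΔ t ht]
    split_ifs with h0
    · simp [cumNorm, cumSq, h0]
    · rfl

end ScaleFreeFTRL

open ScaleFreeFTRL

theorem stmt_6 (α : ℝ) (hα : 0 < α) (T : ℕ) (hT : 1 ≤ T) (v : ℕ → ℝ) (u : ℝ)
    (Δ : ℕ → ℝ) (hΔ0 : Δ 0 = 0)
    (hΔ : ∀ t, 1 ≤ t →
      Δ t = if (∑ s ∈ Finset.Icc 1 t, (v s) ^ 2) = 0 then 0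
        else -α * (∑ s ∈ Finset.Icc 1 t, v s) / Real.sqrt (∑ s ∈ Finset.Icc 1 t, (v s) ^ 2)) :
    ∑ t ∈ Finset.Icc 1 T, v t * (Δ (t - 1) - u)
      ≤ (u ^ 2 / (2 * α) + Real.sqrt 2 * α) * Real.sqrt (∑ t ∈ Finset.Icc 1 T, (v t) ^ 2)
        + 2 * ((Finset.Icc 1 T).sup' (Finset.nonempty_Icc.mpr hT) fun t => |Δ t|)
            * ((Finset.Icc 1 T).sup' (Finset.nonempty_Icc.mpr hT) fun t => |v t|) := by
  have hΔ' := iterate_eq hΔ0 hΔ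
  set D := (Icc 1 T).sup' (nonempty_Icc.mpr hT) fun t => |Δ t|
  set L := (Icc 1 T).sup' (nonempty_Icc.mpr hT) fun t => |v t|
  have hTmem : T ∈ Icc 1 T := mem_Icc.2 ⟨hT, le_rfl⟩
  have hD0 : 0 ≤ D := (abs_nonneg _).trans (le_sup' (fun t => |Δ t|) hTmem)
  have hL0 : 0 ≤ L := (abs_nonneg _).trans (le_sup' (fun t => |v t|) hTmem)
  have hD : ∀ t ∈ Icc 1 T, |Δ (t - 1)| ≤ D := fun t ht => by
    rcases Nat.eq_zero_or_pos (t - 1) with h0 | hpos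
    · rwa [h0, hΔ0, abs_zero]
    · exact le_sup' (fun t => |Δ t|) (mem_Icc.2 ⟨hpos, by grind⟩)
  have hsteps := sum_regret_increment_le v hα.le hΔ' hD0 hL0 hD
    fun t ht => le_sup' (fun t => |v t|) ht
  have hfinal := neg_potential_sub_mul_le v hα T u
  have hsqrt2 : √2 * D * L ≤ 2 * D * L := by
    nlinarith [Real.sqrt_two_lt_three_halves, mul_nonneg hD0 hL0]
  rw [sum_mul_sub_eq v (potential_zero v α)]
  change _ ≤ (u ^ 2 / (2 * α) + √2 * α) * cumNorm v T + 2 * D * L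
  linarith
end

section
/- Discounted regret of β-FTRL: for all T > 0, any loss sequence v_1,...,v_T, and any comparator u ∈ ℝ, the iterates Δ_0 = 0 and Δ_t = -α (∑_{s=1}^t β^{t-s} v_s)/√(∑_{s=1}^t (β^{t-s} v_s)^2) (set to 0 when the denominator vanishes) satisfy ∑_{t=1}^T β^{T-t} v_t (Δ_{t-1} - u) ≤ (u^2/(2α) + √2 α) √(∑_{t=1}^T (β^{T-t} v_t)^2) + 2 (max_{t∈[1,T]} |Δ_t|)(max_{t∈[1,T]} |β^{T-t} v_t|). -/
/-!
Multiplying every loss of rounds `1, …, t` by the same positive constant `β ^ (T - t)` does not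
change the iterate `-α G_t / √H_t`, so β-FTRL is scale-free FTRL run on the losses
`g_t = β ^ (T - t) v_t`. For scale-free FTRL the regret against `u` is the sum of the per-round
gaps `g_t x_{t-1} - (m_t - m_{t-1})`, where `m_t = -α G_t² / (2 √H_t)` is the minimum of the
objective `G_t x + √H_t x² / (2α)`, plus `m_T - G_T u ≤ u² √H_T / (2α)`. A round with
`g_t² ≤ H_{t-1}` has gap at most `√2 α (√H_t - √H_{t-1})`; any other round costs in addition
`M (√H_t - √H_{t-1})`, with `M` a bound on the iterates, and these increments add up to at most the norm `√H_{t₀}` at the last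
such round `t₀`, which is below `√2 |g_{t₀}|`.
-/

open Finset

lemma sum_Icc_sub_pred {M : Type*} [AddCommGroup M] (f : ℕ → M) :
    ∀ n : ℕ, ∑ t ∈ Icc 1 n, (f t - f (t - 1)) = f n - f 0
  | 0 => by simp
  | n + 1 => by
      rw [sum_Icc_succ_top (by omega), sum_Icc_sub_pred f n, Nat.add_sub_cancel]
      abel

lemma sum_sub_pred_le_of_subset_Icc {M : Type*} [AddCommGroup M] [PartialOrder M]
    [IsOrderedAddMonoid M] {f : ℕ → M} (hf : Monotone f) {B : Finset ℕ} {n : ℕ}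
    (hB : B ⊆ Icc 1 n) : ∑ t ∈ B, (f t - f (t - 1)) ≤ f n - f 0 := by
  rw [← sum_Icc_sub_pred f n]
  exact sum_le_sum_of_subset_of_nonneg hB fun t _ _ => sub_nonneg.2 (hf (Nat.sub_le t 1))

namespace ScaleFreeFTRL

lemma neg_mul_sq_div_le {α G L : ℝ} (hα : 0 < α) (hL : 0 ≤ L) (hG : L = 0 → G = 0) (u : ℝ) :
    -(α * G ^ 2 / (2 * L)) ≤ G * u + L * u ^ 2 / (2 * α) := by
  rcases hL.eq_or_lt with h | h
  · simp [hG h.symm, ← h]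
  · have hsq : G * u + L * u ^ 2 / (2 * α) + α * G ^ 2 / (2 * L)
        = (L * u + α * G) ^ 2 / (2 * α * L) := by
      field_simp; ring
    have : 0 ≤ (L * u + α * G) ^ 2 / (2 * α * L) := by positivity
    linarith

section Round

/- One round: `a` and `p` are the cumulative loss and loss norm before it, `b` its loss and
`q = √(p² + b²)` the new norm. The left-hand side below is the loss `b x` of the played point
`x = -(α a / p)` minus the increase of the FTRL minimum `-(α G² / (2 L))`. -/
variable {α a b p q : ℝ}

lemma round_gap_eq (hα : α ≠ 0) (hq : 0 < q) (ha : p = 0 → a = 0) :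
    -(b * (α * a / p)) - α * a ^ 2 / (2 * p) + α * (a + b) ^ 2 / (2 * q)
      = (q - p) * (-(2 * α * b * (α * a / p)) - p * (α * a / p) ^ 2) / (2 * α * q)
        + α * b ^ 2 / (2 * q) := by
  rcases eq_or_ne p 0 with hp | hp
  · simp only [hp, ha hp]
    field_simp
    ring
  · field_simp
    ring

lemma round_gap_le (hα : 0 < α) (hp : 0 ≤ p) (hq : 0 ≤ q) (hpq : q ^ 2 = p ^ 2 + b ^ 2)
    (ha : p = 0 → a = 0) {M : ℝ} (hM : |α * a / p| ≤ M) :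
    -(b * (α * a / p)) - α * a ^ 2 / (2 * p) + α * (a + b) ^ 2 / (2 * q)
      ≤ (α + M) * (q - p) := by
  have hpq' : p ≤ q := by nlinarith
  have hbq : |b| ≤ q := abs_le_of_sq_le_sq (by nlinarith) hq
  rcases hq.eq_or_lt with hq0 | hq0
  · have hp0 : p = 0 := by linarith
    have hb0 : b = 0 := by nlinarith
    simp [hp0, hb0, ha hp0, ← hq0]
  set y := α * a / p
  rw [round_gap_eq hα.ne' hq0 ha]
  have h1 : -(2 * α * b * y) - p * y ^ 2 ≤ 2 * α * q * M := by
    have : -(b * y) ≤ q * M :=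
      (neg_le_abs _).trans (abs_mul b y ▸ mul_le_mul hbq hM (abs_nonneg _) hq)
    nlinarith [sq_nonneg y]
  have h2 : (q - p) * (-(2 * α * b * y) - p * y ^ 2) / (2 * α * q) ≤ M * (q - p) := by
    rw [div_le_iff₀ (by positivity)]
    nlinarith [mul_le_mul_of_nonneg_left h1 (sub_nonneg.2 hpq')]
  have h3 : α * b ^ 2 / (2 * q) ≤ α * (q - p) := by
    rw [div_le_iff₀ (by positivity)]
    nlinarith [mul_nonneg hα.le (sub_nonneg.2 hpq'), mul_nonneg hα.le hp]
  linarith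

lemma round_gap_le_of_sq_le (hα : 0 < α) (hp : 0 ≤ p) (hq : 0 ≤ q)
    (hpq : q ^ 2 = p ^ 2 + b ^ 2) (ha : p = 0 → a = 0) (hb : b ^ 2 ≤ p ^ 2) :
    -(b * (α * a / p)) - α * a ^ 2 / (2 * p) + α * (a + b) ^ 2 / (2 * q)
      ≤ √2 * α * (q - p) := by
  have hpq' : p ≤ q := by nlinarith
  rcases hp.eq_or_lt with hp0 | hp0
  · have hb0 : b = 0 := by nlinarith
    have hq0 : q = 0 := by nlinarith
    simp [← hp0, hb0, ha hp0.symm, hq0]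
  have hq0 : 0 < q := hp0.trans_le hpq'
  set y := α * a / p
  rw [round_gap_eq hα.ne' hq0 fun h => absurd h hp0.ne']
  have h1 : -(2 * α * b * y) - p * y ^ 2 ≤ α ^ 2 * b ^ 2 / p := by
    rw [le_div_iff₀ hp0]
    nlinarith [sq_nonneg (p * y + α * b)]
  have h2 : (q - p) * (-(2 * α * b * y) - p * y ^ 2) / (2 * α * q) + α * b ^ 2 / (2 * q)
      ≤ α * b ^ 2 / (2 * p) := by
    calc _ ≤ (q - p) * (α ^ 2 * b ^ 2 / p) / (2 * α * q) + α * b ^ 2 / (2 * q) := by gcongr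
      _ = α * b ^ 2 / (2 * p) := by field_simp; ring
  have hq2 : q ≤ √2 * p := by
    rw [← Real.sqrt_sq hq, ← Real.sqrt_sq hp, ← Real.sqrt_mul zero_le_two]
    exact Real.sqrt_le_sqrt (by nlinarith)
  have h3 : α * b ^ 2 / (2 * p) ≤ √2 * α * (q - p) := by
    rw [div_le_iff₀ (by positivity)]
    have hs : 1 ≤ √2 := Real.one_lt_sqrt_two.le
    nlinarith [mul_nonneg hα.le (sub_nonneg.2 hpq'),
      mul_nonneg (mul_nonneg hα.le (sub_nonneg.2 hpq')) hp]
  linarith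

end Round

variable (g : ℕ → ℝ)

noncomputable def cumLoss (n : ℕ) : ℝ := ∑ t ∈ Icc 1 n, g t

noncomputable def lossNorm (n : ℕ) : ℝ := √(∑ t ∈ Icc 1 n, g t ^ 2)

/-- The minimiser of `x ↦ cumLoss g n * x + lossNorm g n * x ^ 2 / (2 * α)`; when
`lossNorm g n = 0` division by zero makes it `0`. -/
noncomputable def iterate (α : ℝ) (n : ℕ) : ℝ := -α * cumLoss g n / lossNorm g n

/-- The minimum of `x ↦ cumLoss g n * x + lossNorm g n * x ^ 2 / (2 * α)`. -/
noncomputable def minValue (α : ℝ) (n : ℕ) : ℝ := -(α * cumLoss g n ^ 2 / (2 * lossNorm g n))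

lemma lossNorm_nonneg (n : ℕ) : 0 ≤ lossNorm g n := Real.sqrt_nonneg _

variable {g}

lemma cumLoss_succ (n : ℕ) : cumLoss g (n + 1) = cumLoss g n + g (n + 1) :=
  sum_Icc_succ_top (by omega) g

@[simp] lemma lossNorm_zero : lossNorm g 0 = 0 := by simp [lossNorm]

lemma sq_lossNorm (n : ℕ) : lossNorm g n ^ 2 = ∑ t ∈ Icc 1 n, g t ^ 2 :=
  Real.sq_sqrt (sum_nonneg fun t _ => sq_nonneg (g t))

lemma sq_lossNorm_succ (n : ℕ) :
    lossNorm g (n + 1) ^ 2 = lossNorm g n ^ 2 + g (n + 1) ^ 2 := by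
  rw [sq_lossNorm, sq_lossNorm, sum_Icc_succ_top (by omega)]

lemma lossNorm_monotone : Monotone (lossNorm g) :=
  monotone_nat_of_le_succ fun n => Real.sqrt_le_sqrt <|
    sum_le_sum_of_subset_of_nonneg (Icc_subset_Icc_right n.le_succ) fun t _ _ => sq_nonneg (g t)

lemma cumLoss_eq_zero_of_lossNorm_eq_zero {n : ℕ} (h : lossNorm g n = 0) : cumLoss g n = 0 := by
  have hsq : ∑ t ∈ Icc 1 n, g t ^ 2 = 0 := by rw [← sq_lossNorm, h, sq, mul_zero]
  rw [sum_eq_zero_iff_of_nonneg fun t _ => sq_nonneg (g t)] at hsq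
  exact sum_eq_zero fun t ht => pow_eq_zero_iff two_ne_zero |>.1 (hsq t ht)

@[simp] lemma iterate_zero (α : ℝ) : iterate g α 0 = 0 := by simp [iterate]

@[simp] lemma minValue_zero (α : ℝ) : minValue g α 0 = 0 := by simp [minValue]

lemma minValue_le {α : ℝ} (hα : 0 < α) (n : ℕ) (u : ℝ) :
    minValue g α n ≤ cumLoss g n * u + lossNorm g n * u ^ 2 / (2 * α) :=
  neg_mul_sq_div_le hα (lossNorm_nonneg g n) cumLoss_eq_zero_of_lossNorm_eq_zero u

lemma iterate_eq_of_eq_mul {g' : ℕ → ℝ} {c : ℝ} (hc : 0 < c) {n : ℕ}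
    (h : ∀ t ∈ Icc 1 n, g t = c * g' t) (α : ℝ) : iterate g α n = iterate g' α n := by
  have hsum : cumLoss g n = c * cumLoss g' n := by
    rw [cumLoss, cumLoss, mul_sum]; exact sum_congr rfl h
  have hnorm : lossNorm g n = c * lossNorm g' n := by
    rw [lossNorm, lossNorm, ← Real.sqrt_sq hc.le, ← Real.sqrt_mul (sq_nonneg c), mul_sum]
    exact congrArg _ (sum_congr rfl fun t ht => by rw [h t ht, mul_pow])
  rw [iterate, iterate, hsum, hnorm, mul_left_comm, mul_div_mul_left _ _ hc.ne']

lemma iterate_discounted {β : ℝ} (hβ : 0 < β) (v : ℕ → ℝ) (α : ℝ) {t T : ℕ} (ht : t ≤ T) :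
    iterate (fun s => β ^ (T - s) * v s) α t
      = if (∑ s ∈ Icc 1 t, (β ^ (t - s) * v s) ^ 2) = 0 then 0
        else -α * (∑ s ∈ Icc 1 t, β ^ (t - s) * v s)
          / √(∑ s ∈ Icc 1 t, (β ^ (t - s) * v s) ^ 2) := by
  rw [iterate_eq_of_eq_mul (pow_pos hβ (T - t)) (g' := fun s => β ^ (t - s) * v s)
    (fun s hs => by rw [← mul_assoc, ← pow_add, Nat.sub_add_sub_cancel ht (mem_Icc.1 hs).2]) α]
  split_ifs with h
  · simp [iterate, lossNorm, h]
  · rfl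

lemma round_le {α M : ℝ} (hα : 0 < α) {t : ℕ} (ht : 1 ≤ t) (hM : |iterate g α (t - 1)| ≤ M) :
    g t * iterate g α (t - 1) - (minValue g α t - minValue g α (t - 1))
      ≤ √2 * α * (lossNorm g t - lossNorm g (t - 1))
        + M * (if lossNorm g (t - 1) ^ 2 < g t ^ 2
            then lossNorm g t - lossNorm g (t - 1) else 0) := by
  obtain ⟨n, rfl⟩ : ∃ n, t = n + 1 := ⟨t - 1, by omega⟩
  rw [Nat.add_sub_cancel] at hM ⊢
  have hp := lossNorm_nonneg g n
  have hq := lossNorm_nonneg g (n + 1)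
  have hpq := sq_lossNorm_succ (g := g) n
  have ha : lossNorm g n = 0 → cumLoss g n = 0 := cumLoss_eq_zero_of_lossNorm_eq_zero
  have hgap : g (n + 1) * iterate g α n - (minValue g α (n + 1) - minValue g α n)
      = -(g (n + 1) * (α * cumLoss g n / lossNorm g n))
          - α * cumLoss g n ^ 2 / (2 * lossNorm g n)
        + α * (cumLoss g n + g (n + 1)) ^ 2 / (2 * lossNorm g (n + 1)) := by
    rw [iterate, minValue, minValue, cumLoss_succ]; ring
  rw [hgap]
  split_ifs with hbad
  · rw [iterate, neg_mul, neg_div, abs_neg] at hM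
    have hα2 : α ≤ √2 * α := le_mul_of_one_le_left hα.le Real.one_lt_sqrt_two.le
    nlinarith [round_gap_le hα hp hq hpq ha hM, lossNorm_monotone (g := g) n.le_succ]
  · simpa using round_gap_le_of_sq_le hα hp hq hpq ha (not_lt.1 hbad)

lemma sum_filter_sub_lossNorm_le {μ : ℝ} (hμ0 : 0 ≤ μ) {T : ℕ}
    (hμ : ∀ t ∈ Icc 1 T, |g t| ≤ μ) :
    ∑ t ∈ (Icc 1 T).filter (fun t => lossNorm g (t - 1) ^ 2 < g t ^ 2),
      (lossNorm g t - lossNorm g (t - 1)) ≤ √2 * μ := by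
  set B := (Icc 1 T).filter (fun t => lossNorm g (t - 1) ^ 2 < g t ^ 2)
  rcases B.eq_empty_or_nonempty with hB | hB
  · rw [hB, sum_empty]; positivity
  set t₀ := B.max' hB
  have ht₀ : t₀ ∈ B := B.max'_mem hB
  rw [mem_filter] at ht₀
  have hsub : B ⊆ Icc 1 t₀ := fun t ht =>
    mem_Icc.2 ⟨(mem_Icc.1 (mem_filter.1 ht).1).1, B.le_max' t ht⟩
  have hle : lossNorm g t₀ ^ 2 ≤ (√2 * μ) ^ 2 := by
    obtain ⟨n, hn⟩ : ∃ n, t₀ = n + 1 := ⟨t₀ - 1, by have := (mem_Icc.1 ht₀.1).1; omega⟩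
    have hbad : lossNorm g n ^ 2 < g (n + 1) ^ 2 := by simpa [hn] using ht₀.2
    have hgμ : g (n + 1) ^ 2 ≤ μ ^ 2 := by
      rw [← sq_abs]; exact pow_le_pow_left₀ (abs_nonneg _) (hμ _ (hn ▸ ht₀.1)) 2
    rw [hn, sq_lossNorm_succ, mul_pow, Real.sq_sqrt zero_le_two]
    linarith
  calc _ ≤ lossNorm g t₀ - lossNorm g 0 := sum_sub_pred_le_of_subset_Icc lossNorm_monotone hsub
    _ ≤ √2 * μ := by
        rw [lossNorm_zero, sub_zero]
        exact le_of_sq_le_sq hle (by positivity)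

theorem regret_le {α M μ : ℝ} (hα : 0 < α) {T : ℕ} (hM0 : 0 ≤ M)
    (hM : ∀ t < T, |iterate g α t| ≤ M) (hμ0 : 0 ≤ μ) (hμ : ∀ t ∈ Icc 1 T, |g t| ≤ μ) (u : ℝ) :
    ∑ t ∈ Icc 1 T, g t * (iterate g α (t - 1) - u)
      ≤ (u ^ 2 / (2 * α) + √2 * α) * lossNorm g T + √2 * M * μ := by
  set bad := (Icc 1 T).filter (fun t => lossNorm g (t - 1) ^ 2 < g t ^ 2)
  have hdecomp : ∑ t ∈ Icc 1 T, g t * (iterate g α (t - 1) - u)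
      = ∑ t ∈ Icc 1 T, (g t * iterate g α (t - 1) - (minValue g α t - minValue g α (t - 1)))
        + (minValue g α T - cumLoss g T * u) := by
    rw [sum_sub_distrib, sum_Icc_sub_pred, minValue_zero, cumLoss, sum_mul]
    simp only [mul_sub, sum_sub_distrib]
    ring
  have hrounds :
      ∑ t ∈ Icc 1 T, (g t * iterate g α (t - 1) - (minValue g α t - minValue g α (t - 1)))
        ≤ √2 * α * lossNorm g T + M * ∑ t ∈ bad, (lossNorm g t - lossNorm g (t - 1)) := by
    calc _ ≤ ∑ t ∈ Icc 1 T, (√2 * α * (lossNorm g t - lossNorm g (t - 1))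
            + M * (if lossNorm g (t - 1) ^ 2 < g t ^ 2
                then lossNorm g t - lossNorm g (t - 1) else 0)) := by
          refine sum_le_sum fun t ht => round_le hα (mem_Icc.1 ht).1 (hM _ ?_)
          have := mem_Icc.1 ht; omega
      _ = _ := by
          rw [sum_add_distrib, ← mul_sum, ← mul_sum, sum_Icc_sub_pred, sum_filter, lossNorm_zero,
            sub_zero]
  have hbad : M * ∑ t ∈ bad, (lossNorm g t - lossNorm g (t - 1)) ≤ M * (√2 * μ) :=
    mul_le_mul_of_nonneg_left (sum_filter_sub_lossNorm_le hμ0 hμ) hM0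
  rw [hdecomp]
  linear_combination hrounds + minValue_le hα T u + hbad

end ScaleFreeFTRL

open ScaleFreeFTRL

theorem stmt_7 (α β : ℝ) (hα : 0 < α) (hβ : β ∈ Set.Ioc (0:ℝ) 1)
    (T : ℕ) (hT : 1 ≤ T) (v : ℕ → ℝ) (u : ℝ)
    (Δ : ℕ → ℝ) (hΔ0 : Δ 0 = 0)
    (hΔ : ∀ t, 1 ≤ t →
      Δ t = if (∑ s ∈ Finset.Icc 1 t, (β ^ (t - s) * v s) ^ 2) = 0 then 0
        else -α * (∑ s ∈ Finset.Icc 1 t, β ^ (t - s) * v s)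
          / Real.sqrt (∑ s ∈ Finset.Icc 1 t, (β ^ (t - s) * v s) ^ 2)) :
    ∑ t ∈ Finset.Icc 1 T, β ^ (T - t) * v t * (Δ (t - 1) - u)
      ≤ (u ^ 2 / (2 * α) + Real.sqrt 2 * α)
          * Real.sqrt (∑ t ∈ Finset.Icc 1 T, (β ^ (T - t) * v t) ^ 2)
        + 2 * ((Finset.Icc 1 T).sup' (Finset.nonempty_Icc.mpr hT) fun t => |Δ t|)
            * ((Finset.Icc 1 T).sup' (Finset.nonempty_Icc.mpr hT) fun t => |β ^ (T - t) * v t|) := by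
  set g : ℕ → ℝ := fun t => β ^ (T - t) * v t
  set M := (Icc 1 T).sup' (nonempty_Icc.mpr hT) fun t => |Δ t|
  set μ := (Icc 1 T).sup' (nonempty_Icc.mpr hT) fun t => |g t|
  have hiterate : ∀ t ≤ T, Δ t = iterate g α t := by
    intro t htT
    rcases Nat.eq_zero_or_pos t with rfl | ht
    · rw [hΔ0, iterate_zero]
    · rw [hΔ t ht, iterate_discounted hβ.1 v α htT]
  have hTmem : T ∈ Icc 1 T := mem_Icc.2 ⟨hT, le_rfl⟩
  have hM : ∀ t < T, |iterate g α t| ≤ M := by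
    intro t ht
    rw [← hiterate t ht.le]
    rcases Nat.eq_zero_or_pos t with rfl | ht0
    · rw [hΔ0, abs_zero]; exact (abs_nonneg _).trans (le_sup' (fun t => |Δ t|) hTmem)
    · exact le_sup' (fun t => |Δ t|) (mem_Icc.2 ⟨ht0, ht.le⟩)
  have hM0 : 0 ≤ M := (abs_nonneg _).trans (hM 0 hT)
  have hμ0 : 0 ≤ μ := (abs_nonneg _).trans (le_sup' (fun t => |g t|) hTmem)
  calc _ = ∑ t ∈ Icc 1 T, g t * (iterate g α (t - 1) - u) :=
        sum_congr rfl fun t ht => by rw [hiterate (t - 1) (by have := mem_Icc.1 ht; omega)]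
    _ ≤ (u ^ 2 / (2 * α) + √2 * α) * √(∑ t ∈ Icc 1 T, g t ^ 2) + √2 * M * μ :=
        regret_le hα hM0 hM hμ0 (fun t ht => le_sup' (fun t => |g t|) ht) u
    _ ≤ _ := by
        gcongr
        rw [Real.sqrt_le_left zero_le_two]
        norm_num
end

section
/- Adaptive step-size sum bound: for any real sequence v_1,...,v_T with not all among v_1,...,v_t zero for t beyond some index τ, and clipped values ṽ_{t+1} = clip_{√(∑_{s=1}^t v_s^2)}(v_{t+1}), one has ∑_{t=τ+1}^{T-1} ṽ_{t+1}^2 / √(∑_{s=1}^t v_s^2) ≤ 2√2 · √(∑_{t=1}^T v_t^2). -/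
noncomputable def clip (D x : ℝ) : ℝ := x * min (D / |x|) 1

/-!
Clipping at level `D` shrinks `|x|` to `min D |x|`, so the numerator `a = ṽ_{t+1}²` is at most
both `S_t = ∑_{s ≤ t} v_s²` and `v_{t+1}²`. The first bound gives `√(a + S_t) ≤ √2 · √S_t`, so
each term is at most `√2 · a / √(a + S_t) ≤ 2√2 (√(a + S_t) - √S_t) ≤ 2√2 (√S_{t+1} - √S_t)`,
and the sum telescopes.
-/

theorem abs_clip {D : ℝ} (hD : 0 ≤ D) (x : ℝ) : |clip D x| = min D |x| := by
  rcases eq_or_ne x 0 with rfl | hx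
  · simp [clip, hD]
  · have hx' : 0 < |x| := abs_pos.mpr hx
    have hmin : (0 : ℝ) ≤ min (D / |x|) 1 := le_min (by positivity) zero_le_one
    rw [clip, abs_mul, abs_of_nonneg hmin,
      mul_min_of_nonneg _ _ hx'.le, mul_div_cancel₀ _ hx'.ne', mul_one]

theorem sq_clip_le_sq_left {D : ℝ} (hD : 0 ≤ D) (x : ℝ) : clip D x ^ 2 ≤ D ^ 2 := by
  rw [← sq_abs, abs_clip hD]
  exact pow_le_pow_left₀ (le_min hD (abs_nonneg x)) (min_le_left _ _) 2

theorem sq_clip_le_sq_right {D : ℝ} (hD : 0 ≤ D) (x : ℝ) : clip D x ^ 2 ≤ x ^ 2 := by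
  rw [← sq_abs, abs_clip hD, ← sq_abs x]
  exact pow_le_pow_left₀ (le_min hD (abs_nonneg x)) (min_le_right _ _) 2

theorem div_sqrt_add_le {a b : ℝ} (ha : 0 ≤ a) (hb : 0 ≤ b) :
    a / √(a + b) ≤ 2 * (√(a + b) - √b) := by
  have hle : √b ≤ √(a + b) := Real.sqrt_le_sqrt (by linarith)
  refine div_le_of_le_mul₀ (Real.sqrt_nonneg _) (by linarith) ?_
  have h₁ := Real.sq_sqrt (add_nonneg ha hb)
  have h₂ := Real.sq_sqrt hb
  nlinarith [sq_nonneg (√(a + b) - √b)]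

theorem div_sqrt_le_of_le_of_le {a b c : ℝ} (ha : 0 ≤ a) (hab : a ≤ b) (hac : a ≤ c) :
    a / √b ≤ 2 * √2 * (√(b + c) - √b) := by
  have hb : 0 ≤ b := ha.trans hab
  rcases hb.eq_or_lt with rfl | hb
  · simp [Real.sqrt_nonneg]
  have hsum : √(a + b) ≤ √2 * √b := by
    rw [← Real.sqrt_mul zero_le_two]
    exact Real.sqrt_le_sqrt (by linarith)
  calc a / √b = √2 * a / (√2 * √b) := by
        rw [mul_div_mul_left _ _ (Real.sqrt_pos.mpr zero_lt_two).ne']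
    _ ≤ √2 * a / √(a + b) :=
        div_le_div_of_nonneg_left (by positivity) (Real.sqrt_pos.mpr (by linarith)) hsum
    _ ≤ √2 * (2 * (√(a + b) - √b)) := by
        rw [mul_div_assoc]
        exact mul_le_mul_of_nonneg_left (div_sqrt_add_le ha hb.le) (Real.sqrt_nonneg 2)
    _ ≤ 2 * √2 * (√(b + c) - √b) := by
        have : √(a + b) ≤ √(b + c) := Real.sqrt_le_sqrt (by linarith)
        nlinarith [Real.sqrt_nonneg 2]

theorem sq_clip_sqrt_div_sqrt_le {S : ℝ} (hS : 0 ≤ S) (x : ℝ) :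
    clip √S x ^ 2 / √S ≤ 2 * √2 * (√(S + x ^ 2) - √S) := by
  refine div_sqrt_le_of_le_of_le (sq_nonneg _) ?_ (sq_clip_le_sq_right (Real.sqrt_nonneg S) x)
  simpa [Real.sq_sqrt hS] using sq_clip_le_sq_left (Real.sqrt_nonneg S) x

theorem stmt_12_general (T τ : ℕ) (v : ℕ → ℝ)
    (vt : ℕ → ℝ)
    (hvt : ∀ t, vt (t + 1) = clip (Real.sqrt (∑ s ∈ Finset.Icc 1 t, (v s) ^ 2)) (v (t + 1))) :
    ∑ t ∈ Finset.Icc (τ + 1) (T - 1),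
        (vt (t + 1)) ^ 2 / Real.sqrt (∑ s ∈ Finset.Icc 1 t, (v s) ^ 2)
      ≤ 2 * Real.sqrt 2 * Real.sqrt (∑ t ∈ Finset.Icc 1 T, (v t) ^ 2) := by
  set S : ℕ → ℝ := fun t => ∑ s ∈ Finset.Icc 1 t, v s ^ 2
  have hS : ∀ t, 0 ≤ S t := fun t => Finset.sum_nonneg fun s _ => sq_nonneg (v s)
  have hterm : ∀ t, vt (t + 1) ^ 2 / √(S t) ≤ 2 * √2 * (√(S (t + 1)) - √(S t)) := by
    intro t
    rw [hvt, show S (t + 1) = S t + v (t + 1) ^ 2 from Finset.sum_Icc_succ_top (by omega) _]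
    exact sq_clip_sqrt_div_sqrt_le (hS t) _
  have hsub : Finset.Icc (τ + 1) (T - 1) ⊆ Finset.range T := fun t ht => by
    simp only [Finset.mem_Icc, Finset.mem_range] at ht ⊢
    omega
  calc ∑ t ∈ Finset.Icc (τ + 1) (T - 1), vt (t + 1) ^ 2 / √(S t)
      ≤ ∑ t ∈ Finset.range T, vt (t + 1) ^ 2 / √(S t) :=
        Finset.sum_le_sum_of_subset_of_nonneg hsub fun t _ _ => by positivity
    _ ≤ ∑ t ∈ Finset.range T, 2 * √2 * (√(S (t + 1)) - √(S t)) :=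
        Finset.sum_le_sum fun t _ => hterm t
    _ = 2 * √2 * √(S T) := by
        rw [← Finset.mul_sum, Finset.sum_range_sub fun t => √(S t)]
        simp [S]

theorem stmt_12 (T τ : ℕ) (hτT : τ + 1 ≤ T) (v : ℕ → ℝ)
    (hzero : ∀ s ∈ Finset.Icc 1 τ, v s = 0) (hnz : v (τ + 1) ≠ 0)
    (vt : ℕ → ℝ)
    (hvt : ∀ t, vt (t + 1) = clip (Real.sqrt (∑ s ∈ Finset.Icc 1 t, (v s) ^ 2)) (v (t + 1))) :
    ∑ t ∈ Finset.Icc (τ + 1) (T - 1),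
        (vt (t + 1)) ^ 2 / Real.sqrt (∑ s ∈ Finset.Icc 1 t, (v s) ^ 2)
      ≤ 2 * Real.sqrt 2 * Real.sqrt (∑ t ∈ Finset.Icc 1 T, (v t) ^ 2) :=
  stmt_12_general T τ v vt hvt
end

section
/- Clipping error telescoping bound: for any real sequence v_1,...,v_T with ṽ_t = clip_{√(∑_{s=1}^{t-1} v_s^2)}(v_t) and G_t = max_{s∈[1,t]} |v_s| (G_0 = 0), it holds that ∑_{t=1}^T |v_t - ṽ_t| ≤ ∑_{t=1}^T (G_t - G_{t-1}) = G_T. -/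
/-!
Clipping `x` to radius `D ≥ 0` moves it by exactly `max 0 (|x| - D)`. At step `t` the radius
`√(∑_{s<t} v_s²)` dominates every earlier `|v_s|`, hence the running maximum `G_{t-1}`; since also
`|v_t| ≤ G_t`, the clipping error at step `t` is at most the increment `G_t - G_{t-1}`, and these
increments telescope to `G_T`.
-/

open Finset

lemma abs_sub_clip {D : ℝ} (hD : 0 ≤ D) (x : ℝ) : |x - clip D x| = max 0 (|x| - D) := by
  rcases eq_or_ne x 0 with rfl | hx
  · simp [clip, hD]
  have hx : 0 < |x| := abs_pos.mpr hx
  have hmul : |x| * min (D / |x|) 1 = min D |x| := by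
    rw [mul_min_of_nonneg _ _ hx.le, mul_div_cancel₀ _ hx.ne', mul_one]
  have hmin_le : min (D / |x|) 1 ≤ 1 := min_le_right _ _
  calc |x - clip D x| = |x| * (1 - min (D / |x|) 1) := by
        rw [clip, ← mul_one_sub, abs_mul, abs_of_nonneg (sub_nonneg.mpr hmin_le)]
    _ = |x| - min D |x| := by rw [mul_one_sub, hmul]
    _ = max 0 (|x| - D) := by
        rcases le_total D |x| with h | h
        · rw [min_eq_left h, max_eq_right (sub_nonneg.mpr h)]
        · rw [min_eq_right h, max_eq_left (sub_nonpos.mpr h), sub_self]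

lemma abs_le_sqrt_sum_sq {ι : Type*} {s : Finset ι} {i : ι} (hi : i ∈ s) (f : ι → ℝ) :
    |f i| ≤ Real.sqrt (∑ j ∈ s, f j ^ 2) := by
  rw [← Real.sqrt_sq_eq_abs]
  exact Real.sqrt_le_sqrt (single_le_sum (fun j _ => sq_nonneg (f j)) hi)

lemma sum_Icc_one_sub_pred {M : Type*} [AddCommGroup M] (f : ℕ → M) (N : ℕ) :
    ∑ t ∈ Icc 1 N, (f t - f (t - 1)) = f N - f 0 := by
  induction N with
  | zero => simp
  | succ n ih =>
    rw [sum_Icc_succ_top (by omega), ih, Nat.add_sub_cancel]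
    abel

section RunningMax

variable {v G : ℕ → ℝ} (hG0 : G 0 = 0)
  (hG : ∀ t, 1 ≤ t → IsGreatest ((fun s => |v s|) '' Set.Icc 1 t) (G t))
include hG0 hG

lemma runningMax_le {t : ℕ} {c : ℝ} (hc : 0 ≤ c) (hbound : ∀ s ∈ Set.Icc 1 t, |v s| ≤ c) :
    G t ≤ c := by
  rcases Nat.eq_zero_or_pos t with rfl | ht
  · rw [hG0]; exact hc
  · obtain ⟨s, hs, hGs⟩ := (hG t ht).1
    exact hGs ▸ hbound s hs

lemma runningMax_pred_le_sqrt_sum_sq (t : ℕ) :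
    G (t - 1) ≤ Real.sqrt (∑ s ∈ Icc 1 (t - 1), v s ^ 2) :=
  runningMax_le hG0 hG (Real.sqrt_nonneg _) fun _ hs =>
    abs_le_sqrt_sum_sq (mem_Icc.mpr hs) v

lemma runningMax_pred_le {t : ℕ} (ht : 1 ≤ t) : G (t - 1) ≤ G t := by
  have hmax : ∀ s ∈ Set.Icc 1 t, |v s| ≤ G t := fun s hs => (hG t ht).2 ⟨s, hs, rfl⟩
  refine runningMax_le hG0 hG ((abs_nonneg _).trans (hmax t ⟨ht, le_rfl⟩)) fun s hs => ?_
  exact hmax s ⟨hs.1, hs.2.trans (Nat.sub_le t 1)⟩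

end RunningMax

theorem stmt_13 (T : ℕ) (v vt Gm : ℕ → ℝ)
    (hvt : ∀ t, 1 ≤ t →
      vt t = clip (Real.sqrt (∑ s ∈ Finset.Icc 1 (t - 1), (v s) ^ 2)) (v t))
    (hG0 : Gm 0 = 0)
    (hG : ∀ t, 1 ≤ t → IsGreatest ((fun s => |v s|) '' Set.Icc 1 t) (Gm t)) :
    (∑ t ∈ Finset.Icc 1 T, |v t - vt t| ≤ ∑ t ∈ Finset.Icc 1 T, (Gm t - Gm (t - 1)))
    ∧ (∑ t ∈ Finset.Icc 1 T, (Gm t - Gm (t - 1)) = Gm T) := by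
  refine ⟨sum_le_sum fun t ht => ?_, by rw [sum_Icc_one_sub_pred, hG0, sub_zero]⟩
  have ht1 : 1 ≤ t := (mem_Icc.mp ht).1
  have hvG : |v t| ≤ Gm t := (hG t ht1).2 ⟨t, ⟨ht1, le_rfl⟩, rfl⟩
  have hprev_D := runningMax_pred_le_sqrt_sum_sq hG0 hG t
  have hprev_G := runningMax_pred_le hG0 hG ht1
  rw [hvt t ht1, abs_sub_clip (Real.sqrt_nonneg _)]
  exact max_le (by linarith) (by linarith)
end

section
/- Dynamic regret of β-FTRL on bounded domains: for D > 0, β ∈ (0,1), losses v_1,...,v_T with |v_t| ≤ G, and any comparators u_0,...,u_{T-1} with |u_t| ≤ D, the clipped iterates Δ_t = -clip_D(D (∑_{s=1}^t β^{t-s} v_s)/√(∑_{s=1}^t (β^{t-s} v_s)^2)) satisfy ∑_{t=1}^T v_t (Δ_{t-1} - u_{t-1}) ≤ 4DG(1/√(1-β) + √(1-β)·T) + G P/(1-β), where P = ∑_{t=1}^{T-1} |u_t - u_{t-1}| is the path length. -/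
/-!
With `S_t = ∑ β^(t-s) v_s` and `W_t = √(∑ (β^(t-s) v_s)^2)`, the iterate `Δ_t` is the minimiser over
`[-D, D]` of `F_t x = S_t x + W_t / (2D) x^2`. Since `F_{t+1} = β F_t + v_{t+1} x + (W_{t+1} - β W_t)/(2D) x^2`
and `F_t` is `W_t/D`-strongly convex, one round costs at most `2D (W_{t+1} - β W_t)`: this is a
Cauchy–Schwarz estimate, because `W_{t+1} = √(v_{t+1}^2 + (β W_t)^2)` and the iterates move by at most `2D`.
Summing with discount `β` bounds the discounted regret against any fixed comparator by `(5/2) D W_t`,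
and `W_t ≤ G/√(1-β)`. Writing each round's loss as `R_t - β R_{t-1}` in the discounted regrets `R_t`
and summing by parts converts these fixed-comparator bounds into the dynamic bound, each change of
comparator costing `|S_t| |u_t - u_{t-1}| ≤ G/(1-β) |u_t - u_{t-1}|`.
-/

lemma clip_neg (D x : ℝ) : clip D (-x) = -clip D x := by
  simp only [clip, abs_neg, neg_mul]

lemma clip_eq_max_min {D : ℝ} (hD : 0 ≤ D) (x : ℝ) : clip D x = max (-D) (min D x) := by
  rcases le_or_gt |x| D with hx | hx
  · obtain ⟨h₁, h₂⟩ := abs_le.mp hx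
    rcases eq_or_ne x 0 with rfl | h0
    · simp [clip, hD]
    · rw [clip, min_eq_right ((one_le_div (abs_pos.mpr h0)).mpr hx), mul_one,
        min_eq_right h₂, max_eq_right h₁]
  · have hpos : 0 < |x| := hD.trans_lt hx
    rw [clip, min_eq_left ((div_le_one hpos).mpr hx.le)]
    rcases lt_or_gt_of_ne (abs_pos.mp hpos) with hneg | hpos'
    · rw [abs_of_neg hneg] at hx ⊢
      rw [min_eq_right (by linarith), max_eq_left (by linarith)]
      field_simp [hneg.ne]
    · rw [abs_of_pos hpos'] at hx ⊢
      rw [min_eq_left hx.le, max_eq_right (by linarith)]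
      field_simp

lemma abs_clip_le {D : ℝ} (hD : 0 ≤ D) (x : ℝ) : |clip D x| ≤ D := by
  rw [clip_eq_max_min hD, abs_le]
  exact ⟨le_max_left _ _, max_le (by linarith) (min_le_left _ _)⟩

lemma clip_sub_mul_sub_clip_nonneg {D y : ℝ} (hy : |y| ≤ D) (x : ℝ) :
    0 ≤ (clip D x - x) * (y - clip D x) := by
  obtain ⟨h₁, h₂⟩ := abs_le.mp hy
  rw [clip_eq_max_min ((abs_nonneg y).trans hy)]
  rcases le_total D x with hDx | hxD
  · rw [min_eq_left hDx, max_eq_right (by linarith)]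
    nlinarith
  · rw [min_eq_right hxD]
    rcases le_total x (-D) with hxD' | hxD'
    · rw [max_eq_left hxD']
      nlinarith
    · simp [max_eq_right hxD']

-- `z` minimises `x ↦ -2 a z x + a x ^ 2` on `ℝ`, so its projection `clip D z` minimises it on `[-D, D]`.
lemma neg_mul_clip_add_mul_sq_le {a D y : ℝ} (ha : 0 ≤ a) (hy : |y| ≤ D) (z : ℝ) :
    -2 * a * z * clip D z + a * clip D z ^ 2 + a * (y - clip D z) ^ 2
      ≤ -2 * a * z * y + a * y ^ 2 := by
  have key := mul_nonneg (mul_nonneg zero_le_two ha) (clip_sub_mul_sub_clip_nonneg hy z)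
  nlinarith

lemma sub_sqrt_le_mul_add_mul_sq (a b : ℝ) {e : ℝ} (he : |e| ≤ 1) :
    b - √(a ^ 2 + b ^ 2) ≤ a * e + b * e ^ 2 := by
  -- Cauchy–Schwarz against `(-e, 1 - e^2)`, whose norm is at most `1`.
  have he2 : e ^ 2 ≤ 1 := by nlinarith [sq_abs e, abs_nonneg e]
  have hcs : (-a * e + b * (1 - e ^ 2)) ^ 2 ≤ a ^ 2 + b ^ 2 := by
    nlinarith [sq_nonneg (a * (1 - e ^ 2) + b * e), sq_nonneg e,
      mul_nonneg (add_nonneg (sq_nonneg a) (sq_nonneg b)) (mul_nonneg (sq_nonneg e) (sub_nonneg.mpr he2))]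
  nlinarith [Real.le_sqrt_of_sq_le hcs]

noncomputable def discountedSum (β : ℝ) (v : ℕ → ℝ) (t : ℕ) : ℝ :=
  ∑ s ∈ Finset.Icc 1 t, β ^ (t - s) * v s

noncomputable def discountedNorm (β : ℝ) (v : ℕ → ℝ) (t : ℕ) : ℝ :=
  √(discountedSum (β ^ 2) (fun s => v s ^ 2) t)

noncomputable def ftrlObjective (D β : ℝ) (v : ℕ → ℝ) (t : ℕ) (x : ℝ) : ℝ :=
  discountedSum β v t * x + discountedNorm β v t / (2 * D) * x ^ 2

noncomputable def discountedRegret (β : ℝ) (v Δ : ℕ → ℝ) (t : ℕ) (y : ℝ) : ℝ :=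
  discountedSum β (fun s => v s * (Δ (s - 1) - y)) t

lemma discountedRegret_eq_sub (β : ℝ) (v Δ : ℕ → ℝ) (t : ℕ) (y : ℝ) :
    discountedRegret β v Δ t y
      = discountedSum β (fun s => v s * Δ (s - 1)) t - discountedSum β v t * y := by
  simp only [discountedRegret, discountedSum, Finset.sum_mul, ← Finset.sum_sub_distrib]
  exact Finset.sum_congr rfl fun _ _ => by ring

@[simp]
lemma discountedSum_zero (β : ℝ) (v : ℕ → ℝ) : discountedSum β v 0 = 0 := by
  simp [discountedSum]

lemma discountedSum_succ (β : ℝ) (v : ℕ → ℝ) (t : ℕ) :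
    discountedSum β v (t + 1) = β * discountedSum β v t + v (t + 1) := by
  rw [discountedSum, discountedSum, Finset.sum_Icc_succ_top (by omega), Finset.mul_sum,
    Nat.sub_self, pow_zero, one_mul]
  congr 1
  refine Finset.sum_congr rfl fun s hs => ?_
  rw [show t + 1 - s = t - s + 1 by have := (Finset.mem_Icc.mp hs).2; omega, pow_succ]
  ring

lemma sum_sq_eq_discountedSum (β : ℝ) (v : ℕ → ℝ) (t : ℕ) :
    ∑ s ∈ Finset.Icc 1 t, (β ^ (t - s) * v s) ^ 2 = discountedSum (β ^ 2) (fun s => v s ^ 2) t := by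
  simp only [discountedSum, mul_pow, ← pow_mul, mul_comm 2]

lemma abs_discountedSum_le {β G : ℝ} (hβ₀ : 0 ≤ β) (hβ₁ : β < 1) (hG : 0 ≤ G) {v : ℕ → ℝ} :
    ∀ {t : ℕ}, (∀ s ∈ Finset.Icc 1 t, |v s| ≤ G) → |discountedSum β v t| ≤ G / (1 - β)
  | 0, _ => by simpa using div_nonneg hG (sub_nonneg.mpr hβ₁.le)
  | t + 1, hv => by
    have ih := abs_discountedSum_le hβ₀ hβ₁ hG fun s hs =>
      hv s (Finset.Icc_subset_Icc_right t.le_succ hs)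
    have hvt := hv (t + 1) (by simp)
    have hβ' : 0 < 1 - β := sub_pos.mpr hβ₁
    calc |discountedSum β v (t + 1)| ≤ β * |discountedSum β v t| + |v (t + 1)| := by
          rw [discountedSum_succ, ← abs_of_nonneg hβ₀, ← abs_mul, abs_of_nonneg hβ₀]
          exact abs_add_le _ _
      _ ≤ β * (G / (1 - β)) + G := by gcongr
      _ = G / (1 - β) := by field_simp; ring

lemma discountedNorm_le {β G : ℝ} (hβ₀ : 0 ≤ β) (hβ₁ : β < 1) (hG : 0 ≤ G) {v : ℕ → ℝ} {t : ℕ}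
    (hv : ∀ s ∈ Finset.Icc 1 t, |v s| ≤ G) : discountedNorm β v t ≤ G / √(1 - β) := by
  have hsq : discountedSum (β ^ 2) (fun s => v s ^ 2) t ≤ G ^ 2 / (1 - β) :=
    calc _ ≤ G ^ 2 / (1 - β ^ 2) := (le_abs_self _).trans <|
          abs_discountedSum_le (sq_nonneg β) (by nlinarith) (sq_nonneg G) fun s hs => by
            simpa [abs_of_nonneg (sq_nonneg (v s))] using pow_le_pow_left₀ (abs_nonneg _) (hv s hs) 2
      _ ≤ G ^ 2 / (1 - β) := by
        gcongr
        nlinarith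
  calc discountedNorm β v t ≤ √(G ^ 2 / (1 - β)) := Real.sqrt_le_sqrt hsq
    _ = G / √(1 - β) := by rw [Real.sqrt_div (sq_nonneg G), Real.sqrt_sq hG]

lemma discountedNorm_succ (β : ℝ) (v : ℕ → ℝ) (t : ℕ) :
    discountedNorm β v (t + 1) = √(v (t + 1) ^ 2 + (β * discountedNorm β v t) ^ 2) := by
  have hV : 0 ≤ discountedSum (β ^ 2) (fun s => v s ^ 2) t := by
    rw [← sum_sq_eq_discountedSum]; positivity
  rw [discountedNorm, discountedNorm, discountedSum_succ, mul_pow, Real.sq_sqrt hV, add_comm]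

lemma discountedSum_eq_zero_of_discountedNorm_eq_zero {β : ℝ} {v : ℕ → ℝ} {t : ℕ}
    (h : discountedNorm β v t = 0) : discountedSum β v t = 0 := by
  rw [discountedNorm, ← sum_sq_eq_discountedSum, Real.sqrt_eq_zero (by positivity),
    Finset.sum_eq_zero_iff_of_nonneg fun _ _ => sq_nonneg _] at h
  exact Finset.sum_eq_zero fun s hs => pow_eq_zero_iff two_ne_zero |>.mp (h s hs)

lemma ftrlObjective_succ (D β : ℝ) (v : ℕ → ℝ) (t : ℕ) (x : ℝ) :
    ftrlObjective D β v (t + 1) x = β * ftrlObjective D β v t x + v (t + 1) * x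
      + (discountedNorm β v (t + 1) - β * discountedNorm β v t) / (2 * D) * x ^ 2 := by
  simp only [ftrlObjective, discountedSum_succ]
  ring

section ClippedFTRL

variable {D β : ℝ} {v Δ : ℕ → ℝ} (hD : 0 < D)
  (hΔ : ∀ t, Δ t = clip D (-(D * discountedSum β v t / discountedNorm β v t)))
include hD hΔ

lemma ftrlObjective_add_sq_le (t : ℕ) {y : ℝ} (hy : |y| ≤ D) :
    ftrlObjective D β v t (Δ t) + discountedNorm β v t / (2 * D) * (y - Δ t) ^ 2
      ≤ ftrlObjective D β v t y := by
  have hW : 0 ≤ discountedNorm β v t := Real.sqrt_nonneg _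
  rcases hW.eq_or_lt with hW | hW
  · simp [ftrlObjective, ← hW, discountedSum_eq_zero_of_discountedNorm_eq_zero hW.symm]
  · have key := neg_mul_clip_add_mul_sq_le (by positivity : 0 ≤ discountedNorm β v t / (2 * D)) hy
      (-(D * discountedSum β v t / discountedNorm β v t))
    rw [← hΔ t] at key
    convert key using 2 <;> simp only [ftrlObjective] <;> field_simp

lemma ftrlObjective_step (hβ : 0 ≤ β) (t : ℕ) :
    β * ftrlObjective D β v t (Δ t) + v (t + 1) * Δ t
      ≤ ftrlObjective D β v (t + 1) (Δ (t + 1))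
        + 2 * D * (discountedNorm β v (t + 1) - β * discountedNorm β v t) := by
  have hΔabs : ∀ s, |Δ s| ≤ D := fun s => hΔ s ▸ abs_clip_le hD.le _
  have hopt := ftrlObjective_add_sq_le hD hΔ t (hΔabs (t + 1))
  have hW' := discountedNorm_succ β v t
  have hmono : β * discountedNorm β v t ≤ discountedNorm β v (t + 1) :=
    hW' ▸ Real.le_sqrt_of_sq_le (by nlinarith)
  have he : |(Δ (t + 1) - Δ t) / (2 * D)| ≤ 1 := by
    rw [abs_div, abs_of_pos (by positivity : (0 : ℝ) < 2 * D), div_le_one (by positivity)]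
    linarith [abs_sub (Δ (t + 1)) (Δ t), hΔabs t, hΔabs (t + 1)]
  have hcs : 2 * D * (β * discountedNorm β v t - discountedNorm β v (t + 1))
      ≤ v (t + 1) * (Δ (t + 1) - Δ t)
        + β * discountedNorm β v t / (2 * D) * (Δ (t + 1) - Δ t) ^ 2 := by
    refine (mul_le_mul_of_nonneg_left
      (hW' ▸ sub_sqrt_le_mul_add_mul_sq (v (t + 1)) (β * discountedNorm β v t) he)
      (by positivity : (0 : ℝ) ≤ 2 * D)).trans_eq ?_
    field_simp
  have hgrowth : 0 ≤ (discountedNorm β v (t + 1) - β * discountedNorm β v t) / (2 * D)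
      * Δ (t + 1) ^ 2 := by
    have := sub_nonneg.mpr hmono
    positivity
  rw [ftrlObjective_succ]
  linear_combination β * hopt + hcs + hgrowth

lemma discountedSum_loss_le (hβ : 0 ≤ β) (t : ℕ) :
    discountedSum β (fun s => v s * Δ (s - 1)) t
      ≤ ftrlObjective D β v t (Δ t) + 2 * D * discountedNorm β v t := by
  induction t with
  | zero => simp [ftrlObjective, discountedNorm]
  | succ t ih =>
    rw [discountedSum_succ, Nat.add_sub_cancel]
    linear_combination β * ih + ftrlObjective_step hD hΔ hβ t

lemma discountedRegret_le (hβ : 0 ≤ β) (t : ℕ) {y : ℝ} (hy : |y| ≤ D) :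
    discountedRegret β v Δ t y ≤ 5 / 2 * D * discountedNorm β v t := by
  have hW : 0 ≤ discountedNorm β v t := Real.sqrt_nonneg _
  have hy2 : y ^ 2 ≤ D ^ 2 := sq_le_sq' (abs_le.mp hy).1 (abs_le.mp hy).2
  have hreg : discountedNorm β v t / (2 * D) * y ^ 2 ≤ D / 2 * discountedNorm β v t := by
    rw [div_mul_eq_mul_div, div_le_iff₀ (by positivity)]
    nlinarith
  have hsq : 0 ≤ discountedNorm β v t / (2 * D) * (y - Δ t) ^ 2 := by positivity
  have hloss := discountedSum_loss_le hD hΔ hβ t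
  have hopt := ftrlObjective_add_sq_le hD hΔ t hy
  simp only [ftrlObjective] at hloss hopt
  rw [discountedRegret_eq_sub]
  linear_combination hloss + hopt + hreg + hsq

end ClippedFTRL

lemma sum_mul_sub_eq_discountedRegret (β : ℝ) (v Δ u : ℕ → ℝ) (m : ℕ) :
    ∑ t ∈ Finset.Icc 1 (m + 1), v t * (Δ (t - 1) - u (t - 1))
      = discountedRegret β v Δ (m + 1) (u m)
        + ∑ t ∈ Finset.Icc 1 m, ((1 - β) * discountedRegret β v Δ t (u t)
          + discountedSum β v t * (u t - u (t - 1))) := by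
  induction m with
  | zero => simp [discountedRegret, discountedSum]
  | succ m ih =>
    rw [Finset.sum_Icc_succ_top (by omega), ih, Finset.sum_Icc_succ_top (by omega)]
    simp only [discountedRegret_eq_sub, discountedSum_succ, Nat.add_sub_cancel]
    ring

lemma sum_mul_sub_le_of_discountedRegret_le {β ε M : ℝ} (hβ : β ≤ 1) {v Δ u : ℕ → ℝ} {m : ℕ}
    (hR : ∀ t ≤ m + 1, ∀ s, discountedRegret β v Δ t (u s) ≤ ε)
    (hS : ∀ t ≤ m, |discountedSum β v t| ≤ M) :
    ∑ t ∈ Finset.Icc 1 (m + 1), v t * (Δ (t - 1) - u (t - 1))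
      ≤ ε + m * ((1 - β) * ε) + M * ∑ t ∈ Finset.Icc 1 m, |u t - u (t - 1)| := by
  have hterm : ∀ t ∈ Finset.Icc 1 m, (1 - β) * discountedRegret β v Δ t (u t)
      + discountedSum β v t * (u t - u (t - 1)) ≤ (1 - β) * ε + M * |u t - u (t - 1)| := by
    intro t ht
    have ht : t ≤ m := (Finset.mem_Icc.mp ht).2
    refine add_le_add (mul_le_mul_of_nonneg_left (hR t (by omega) t) (by linarith)) ?_
    calc _ ≤ |discountedSum β v t| * |u t - u (t - 1)| := (le_abs_self _).trans (abs_mul _ _).le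
      _ ≤ M * |u t - u (t - 1)| := by gcongr; exact hS t ht
  rw [sum_mul_sub_eq_discountedRegret β]
  calc _ ≤ ε + ∑ t ∈ Finset.Icc 1 m, ((1 - β) * ε + M * |u t - u (t - 1)|) :=
        add_le_add (hR (m + 1) le_rfl m) (Finset.sum_le_sum hterm)
    _ = _ := by
      rw [Finset.sum_add_distrib, Finset.sum_const, Nat.card_Icc, ← Finset.mul_sum, nsmul_eq_mul]
      simp only [Nat.add_sub_cancel]
      ring

-- With `x / 0 = 0` the two branches of `hΔ` agree.
lemma eq_clip_discountedSum {D β : ℝ} {v Δ : ℕ → ℝ} (hΔ0 : Δ 0 = 0)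
    (hΔ : ∀ t, 1 ≤ t →
      Δ t = if (∑ s ∈ Finset.Icc 1 t, (β ^ (t - s) * v s) ^ 2) = 0 then 0
        else -clip D (D * (∑ s ∈ Finset.Icc 1 t, β ^ (t - s) * v s)
          / Real.sqrt (∑ s ∈ Finset.Icc 1 t, (β ^ (t - s) * v s) ^ 2))) (t : ℕ) :
    Δ t = clip D (-(D * discountedSum β v t / discountedNorm β v t)) := by
  rcases t with _ | t
  · simp [hΔ0, clip]
  · rw [hΔ (t + 1) t.succ_pos, sum_sq_eq_discountedSum]
    split_ifs with h
    · simp [discountedNorm, h, clip]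
    · exact (clip_neg D _).symm

theorem stmt_14 (D G β : ℝ) (hD : 0 < D) (hβ : β ∈ Set.Ioo (0:ℝ) 1)
    (T : ℕ) (hT : 1 ≤ T) (v u : ℕ → ℝ)
    (hG : ∀ t ∈ Finset.Icc 1 T, |v t| ≤ G)
    (hu : ∀ t, |u t| ≤ D)
    (Δ : ℕ → ℝ) (hΔ0 : Δ 0 = 0)
    (hΔ : ∀ t, 1 ≤ t →
      Δ t = if (∑ s ∈ Finset.Icc 1 t, (β ^ (t - s) * v s) ^ 2) = 0 then 0
        else -clip D (D * (∑ s ∈ Finset.Icc 1 t, β ^ (t - s) * v s)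
          / Real.sqrt (∑ s ∈ Finset.Icc 1 t, (β ^ (t - s) * v s) ^ 2))) :
    ∑ t ∈ Finset.Icc 1 T, v t * (Δ (t - 1) - u (t - 1))
      ≤ 4 * D * G * (1 / Real.sqrt (1 - β) + Real.sqrt (1 - β) * T)
        + G * (∑ t ∈ Finset.Icc 1 (T - 1), |u t - u (t - 1)|) / (1 - β) := by
  obtain ⟨hβ₀, hβ₁⟩ := hβ
  obtain ⟨m, rfl⟩ : ∃ m, T = m + 1 := ⟨T - 1, by omega⟩
  have hG₀ : 0 ≤ G := (abs_nonneg _).trans (hG 1 (by simp))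
  have hGt : ∀ t ≤ m + 1, ∀ s ∈ Finset.Icc 1 t, |v s| ≤ G := fun t ht s hs =>
    hG s (Finset.Icc_subset_Icc_right ht hs)
  have hiter := eq_clip_discountedSum hΔ0 hΔ
  have hr : 0 < √(1 - β) := Real.sqrt_pos.mpr (by linarith)
  have hR : ∀ t ≤ m + 1, ∀ s, discountedRegret β v Δ t (u s) ≤ 4 * D * G / √(1 - β) := by
    intro t ht s
    have hW := discountedNorm_le hβ₀.le hβ₁ hG₀ (hGt t ht)
    calc _ ≤ 5 / 2 * D * discountedNorm β v t := discountedRegret_le hD hiter hβ₀.le t (hu s)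
      _ ≤ 5 / 2 * D * (G / √(1 - β)) := by gcongr
      _ ≤ 4 * D * G / √(1 - β) := by
        rw [mul_div_assoc]
        gcongr
        norm_num
  have hS : ∀ t ≤ m, |discountedSum β v t| ≤ G / (1 - β) := fun t ht =>
    abs_discountedSum_le hβ₀.le hβ₁ hG₀ (hGt t (by omega))
  refine (sum_mul_sub_le_of_discountedRegret_le hβ₁.le hR hS).trans ?_
  have hscale : (1 - β) * (4 * D * G / √(1 - β)) = 4 * D * G * √(1 - β) := by
    field_simp
    rw [Real.sq_sqrt (by linarith), mul_comm]
  rw [hscale, Nat.add_sub_cancel, Nat.cast_add_one]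
  calc _ = 4 * D * G * (1 / √(1 - β) + √(1 - β) * m)
        + G * (∑ t ∈ Finset.Icc 1 m, |u t - u (t - 1)|) / (1 - β) := by ring
    _ ≤ _ := by gcongr; linarith
end

section
/- Lower bound for non-momentum learners: let T be a multiple of 4 and define the 2D loss sequence v_t = (1,0) for even t ≤ T/2, v_t = (0,1) for odd t ≤ T/2, v_t = (-1,0) for even t > T/2, v_t = (0,-1) for odd t > T/2, and comparators u_t = (-1,-1) for 0 ≤ t ≤ T/2 - 1 and u_t = (1,1) for t ≥ T/2. Then ∑_{t=1}^T ⟨v_t, u_{t-1}⟩ = -T, the coordinate-wise path length is at most 2 in each coordinate, each u_{t-1} minimizes ⟨v_t, ·⟩ over [-1,1]^2, and any learner of the form Δ_t[i] = -α_t[i] v_t[i] (with arbitrary α_t[i] > 0) satisfies ∑_{t=1}^T ⟨v_t, Δ_{t-1}⟩ = 0, hence its dynamic regret equals T. -/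
/-!
The losses alternate between the two coordinate axes, so `v t` and `v (t + 1)` have disjoint
supports. A learner whose output `Δ (t - 1)` is a coordinatewise multiple of `v (t - 1)` is
therefore orthogonal to `v t` in every round and suffers zero loss, while the comparator, which
switches from `(-1, -1)` to `(1, 1)` exactly once (when the losses change sign), earns `-1` per
round.
-/

noncomputable def dot2 (p q : Fin 2 → ℝ) : ℝ := p 0 * q 0 + p 1 * q 1

open Finset

lemma dot2_sub_right (p q r : Fin 2 → ℝ) : dot2 p (q - r) = dot2 p q - dot2 p r := by
  simp only [dot2, Pi.sub_apply]
  ring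

lemma dot2_pred_eq_zero_of_mul_succ_eq_zero {v Δ a : ℕ → Fin 2 → ℝ}
    (hv : ∀ t i, v t i * v (t + 1) i = 0) (hΔ0 : ∀ i, Δ 0 i = 0)
    (hΔ : ∀ t, 1 ≤ t → ∀ i, Δ t i = -(a t i) * v t i) (t : ℕ) :
    dot2 (v t) (Δ (t - 1)) = 0 := by
  obtain h | ⟨s, hs⟩ : t - 1 = 0 ∨ ∃ s, t = s + 2 := by
    rcases t with _ | _ | s <;> simp
  · simp [dot2, h, hΔ0]
  · subst hs
    have hv0 := hv (s + 1) 0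
    have hv1 := hv (s + 1) 1
    simp only [dot2, show s + 2 - 1 = s + 1 from rfl, hΔ (s + 1) (by omega)]
    linear_combination (-(a (s + 1) 0)) * hv0 + (-(a (s + 1) 1)) * hv1

section HardInstance

variable (T : ℕ)

noncomputable def lossSeq (t : ℕ) : Fin 2 → ℝ :=
  if t ≤ T / 2 then (if Even t then ![1, 0] else ![0, 1])
  else (if Even t then ![-1, 0] else ![0, -1])

noncomputable def comparatorSeq (t : ℕ) : Fin 2 → ℝ :=
  if t < T / 2 then ![-1, -1] else ![1, 1]

lemma lossSeq_one_of_even {t : ℕ} (ht : Even t) : lossSeq T t 1 = 0 := by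
  unfold lossSeq
  split_ifs <;> simp

lemma lossSeq_zero_of_odd {t : ℕ} (ht : Odd t) : lossSeq T t 0 = 0 := by
  rw [← Nat.not_even_iff_odd] at ht
  unfold lossSeq
  split_ifs <;> simp

lemma lossSeq_mul_lossSeq_succ (t : ℕ) (i : Fin 2) :
    lossSeq T t i * lossSeq T (t + 1) i = 0 := by
  rcases Nat.even_or_odd t with ht | ht <;> fin_cases i
  · simp [lossSeq_zero_of_odd T ht.add_one]
  · simp [lossSeq_one_of_even T ht]
  · simp [lossSeq_zero_of_odd T ht]
  · simp [lossSeq_one_of_even T ht.add_one]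

lemma dot2_lossSeq_comparatorSeq_pred {t : ℕ} (ht : 1 ≤ t) :
    dot2 (lossSeq T t) (comparatorSeq T (t - 1)) = -1 := by
  have hswitch : t - 1 < T / 2 ↔ t ≤ T / 2 := by omega
  unfold lossSeq comparatorSeq
  simp only [hswitch]
  split_ifs <;> norm_num [dot2]

lemma neg_one_le_dot2_lossSeq (t : ℕ) {p : Fin 2 → ℝ} (hp : ∀ i, |p i| ≤ 1) :
    -1 ≤ dot2 (lossSeq T t) p := by
  have hp0 := abs_le.mp (hp 0)
  have hp1 := abs_le.mp (hp 1)
  unfold lossSeq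
  split_ifs <;>
    simp only [dot2, Matrix.cons_val_zero, Matrix.cons_val_one, Matrix.cons_val_fin_one] <;> linarith

lemma abs_comparatorSeq_sub_pred_le (t : ℕ) (i : Fin 2) :
    |comparatorSeq T t i - comparatorSeq T (t - 1) i| ≤ if t = T / 2 then 2 else 0 := by
  unfold comparatorSeq
  split_ifs <;> fin_cases i <;> norm_num <;> omega

lemma sum_abs_comparatorSeq_sub_pred_le (i : Fin 2) :
    ∑ t ∈ Icc 1 (T - 1), |comparatorSeq T t i - comparatorSeq T (t - 1) i| ≤ 2 :=
  calc _ ≤ ∑ t ∈ Icc 1 (T - 1), if t = T / 2 then (2 : ℝ) else 0 :=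
        sum_le_sum fun t _ => abs_comparatorSeq_sub_pred_le T t i
    _ ≤ 2 := by
        rw [sum_ite_eq']
        split_ifs <;> norm_num

end HardInstance

theorem stmt_16_general (T : ℕ)
    (v u : ℕ → Fin 2 → ℝ)
    (hv : ∀ t, v t = if t ≤ T / 2 then (if Even t then ![1, 0] else ![0, 1])
                     else (if Even t then ![-1, 0] else ![0, -1]))
    (hu : ∀ t, u t = if t < T / 2 then ![-1, -1] else ![1, 1]) :
    (∑ t ∈ Finset.Icc 1 T, dot2 (v t) (u (t - 1)) = -(T : ℝ))
    ∧ (∀ i : Fin 2, ∑ t ∈ Finset.Icc 1 (T - 1), |u t i - u (t - 1) i| ≤ 2)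
    ∧ (∀ t ∈ Finset.Icc 1 T, ∀ p : Fin 2 → ℝ, (∀ i, |p i| ≤ 1) →
        dot2 (v t) (u (t - 1)) ≤ dot2 (v t) p)
    ∧ (∀ (Δ a : ℕ → Fin 2 → ℝ),
        (∀ t i, 0 < a t i) →
        (∀ i, Δ 0 i = 0) →
        (∀ t, 1 ≤ t → ∀ i, Δ t i = -(a t i) * v t i) →
        (∑ t ∈ Finset.Icc 1 T, dot2 (v t) (Δ (t - 1)) = 0
          ∧ ∑ t ∈ Finset.Icc 1 T, dot2 (v t) (Δ (t - 1) - u (t - 1)) = (T : ℝ))) := by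
  obtain rfl : v = lossSeq T := funext hv
  obtain rfl : u = comparatorSeq T := funext hu
  have hround : ∀ t ∈ Icc 1 T, dot2 (lossSeq T t) (comparatorSeq T (t - 1)) = -1 :=
    fun t ht => dot2_lossSeq_comparatorSeq_pred T (mem_Icc.mp ht).1
  have hcomparator : ∑ t ∈ Icc 1 T, dot2 (lossSeq T t) (comparatorSeq T (t - 1)) = -(T : ℝ) := by
    simp [sum_congr rfl hround]
  refine ⟨hcomparator, sum_abs_comparatorSeq_sub_pred_le T,
    fun t ht p hp => hround t ht ▸ neg_one_le_dot2_lossSeq T t hp, ?_⟩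
  intro Δ a _ hΔ0 hΔ
  have hlearner : ∑ t ∈ Icc 1 T, dot2 (lossSeq T t) (Δ (t - 1)) = 0 :=
    sum_eq_zero fun t _ =>
      dot2_pred_eq_zero_of_mul_succ_eq_zero (lossSeq_mul_lossSeq_succ T) hΔ0 hΔ t
  refine ⟨hlearner, ?_⟩
  simp only [dot2_sub_right, sum_sub_distrib, hlearner, hcomparator, zero_sub, neg_neg]

theorem stmt_16 (T : ℕ) (hT4 : 4 ∣ T) (hT : 0 < T)
    (v u : ℕ → Fin 2 → ℝ)
    (hv : ∀ t, v t = if t ≤ T / 2 then (if Even t then ![1, 0] else ![0, 1])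
                     else (if Even t then ![-1, 0] else ![0, -1]))
    (hu : ∀ t, u t = if t < T / 2 then ![-1, -1] else ![1, 1]) :
    (∑ t ∈ Finset.Icc 1 T, dot2 (v t) (u (t - 1)) = -(T : ℝ))
    ∧ (∀ i : Fin 2, ∑ t ∈ Finset.Icc 1 (T - 1), |u t i - u (t - 1) i| ≤ 2)
    ∧ (∀ t ∈ Finset.Icc 1 T, ∀ p : Fin 2 → ℝ, (∀ i, |p i| ≤ 1) →
        dot2 (v t) (u (t - 1)) ≤ dot2 (v t) p)
    ∧ (∀ (Δ a : ℕ → Fin 2 → ℝ),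
        (∀ t i, 0 < a t i) →
        (∀ i, Δ 0 i = 0) →
        (∀ t, 1 ≤ t → ∀ i, Δ t i = -(a t i) * v t i) →
        (∑ t ∈ Finset.Icc 1 T, dot2 (v t) (Δ (t - 1)) = 0
          ∧ ∑ t ∈ Finset.Icc 1 T, dot2 (v t) (Δ (t - 1) - u (t - 1)) = (T : ℝ))) :=
  stmt_16_general T v u hv hu
end
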